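/- arXiv:1707.09213 — 8 statements merged into one kernel-verified Lean document; each statement's English description precedes it below -/
import Mathlib

section
/- Let k ≥ 1 and l ≥ 1 be integers with l·k < (k+2)². Then the form B is negative definite on the orthogonal complement of ω': every nonzero vector v ∈ ℚ^{l+1} with B(v, ω') = 0 satisfies B(v, v) < 0. -/
/-- The symmetric bilinear form on `ℚ^{l+1}` with `B(e₀,e₀) = k`, `B(eᵢ,eᵢ) = -1` for
`1 ≤ i ≤ l`, and `B(eᵢ,eⱼ) = 0` for `i ≠ j`. -/
def bform (k l : ℕ) (v w : Fin (l + 1) → ℚ) : ℚ :=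
  ((k : ℚ) + 1) * (v 0 * w 0) - ∑ i, v i * w i

/-- The vector `ω' = -(k+2)·e₀ + k·(e₁ + ⋯ + e_l)`. -/
def omegaV (k l : ℕ) : Fin (l + 1) → ℚ :=
  fun i => if i = 0 then -((k : ℚ) + 2) else (k : ℚ)

/-- If `l·k < (k+2)²` then the form `B` is negative definite on the orthogonal
complement of `ω'`. -/
theorem negdef_on_orthogonal_complement (k l : ℕ) (hk : 1 ≤ k) (hl : 1 ≤ l)
    (hdeg : l * k < (k + 2) ^ 2) (v : Fin (l + 1) → ℚ) (hv : v ≠ 0)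
    (hperp : bform k l v (omegaV k l) = 0) :
    bform k l v v < 0 := by
  set S : ℚ := ∑ i : Fin l, v i.succ with hS
  set Q : ℚ := ∑ i : Fin l, (v i.succ) ^ 2 with hQ
  have hQ0 : 0 ≤ Q := Finset.sum_nonneg fun i _ => sq_nonneg _
  -- rewrite hperp
  have hperp' : (k : ℚ) * S = -((k : ℚ) + 2) * ((k : ℚ) * v 0) := by
    have : bform k l v (omegaV k l) =
        ((k : ℚ) + 1) * (v 0 * (-((k : ℚ) + 2)))
          - (v 0 * (-((k : ℚ) + 2)) + ∑ i : Fin l, v i.succ * (k : ℚ)) := by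
      simp [bform, omegaV, Fin.sum_univ_succ, Fin.succ_ne_zero]
    rw [this, ← Finset.sum_mul] at hperp
    linear_combination -hperp
  have hk0 : (0 : ℚ) < k := by exact_mod_cast hk
  have hSval : S = -((k : ℚ) + 2) * v 0 := by
    have h2 : (k : ℚ) * S = (k : ℚ) * (-((k : ℚ) + 2) * v 0) := by
      linear_combination hperp'
    exact mul_left_cancel₀ (ne_of_gt hk0) h2
  have hB : bform k l v v = (k : ℚ) * (v 0) ^ 2 - Q := by
    have h3 : ∑ i : Fin l, v i.succ * v i.succ = Q := by
      rw [hQ]; exact Finset.sum_congr rfl fun i _ => (sq (v i.succ)).symm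
    simp only [bform, Fin.sum_univ_succ, h3]
    ring
  have hCS : S ^ 2 ≤ (l : ℚ) * Q := by
    have := sq_sum_le_card_mul_sum_sq (s := (Finset.univ : Finset (Fin l)))
      (f := fun i => v i.succ)
    simpa using this
  have hl0 : (0 : ℚ) < l := by exact_mod_cast hl
  by_cases h0 : v 0 = 0
  · -- then S = 0 and some v i.succ ≠ 0
    have hQpos : 0 < Q := by
      obtain ⟨i, hi⟩ := Function.ne_iff.mp hv
      rcases Fin.eq_zero_or_eq_succ i with rfl | ⟨j, rfl⟩
      · exact absurd h0 (by simpa using hi)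
      · exact Finset.sum_pos' (fun i _ => sq_nonneg _)
          ⟨j, Finset.mem_univ j, lt_of_le_of_ne (sq_nonneg _) (Ne.symm (pow_ne_zero 2 hi))⟩
    rw [hB, h0]
    simpa using hQpos
  · have hv2 : 0 < (v 0) ^ 2 := by positivity
    have hS2 : ((k : ℚ) + 2) ^ 2 * (v 0) ^ 2 ≤ (l : ℚ) * Q := by
      calc ((k : ℚ) + 2) ^ 2 * (v 0) ^ 2 = S ^ 2 := by rw [hSval]; ring
        _ ≤ (l : ℚ) * Q := hCS
    have hdeg' : (l : ℚ) * k < ((k : ℚ) + 2) ^ 2 := by exact_mod_cast hdeg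
    have : (l : ℚ) * bform k l v v < 0 := by
      rw [hB]
      nlinarith
    nlinarith
end

section
/- Let k ≥ 1 and l be integers with k+2 ≤ l and l·k < (k+2)². Then the ℚ-linear span of R^l_k inside ℚ^{l+1} is exactly the subspace {v ∈ ℚ^{l+1} : B(v, ω') = 0}; in particular this span has dimension l. -/
/-- The integral version of the bilinear form. -/
def bformZ (k l : ℕ) (v w : Fin (l + 1) → ℤ) : ℤ :=
  ((k : ℤ) + 1) * (v 0 * w 0) - ∑ i, v i * w i

/-- The vector `ω' = -(k+2)·e₀ + k·(e₁ + ⋯ + e_l)` over `ℤ`. -/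
def omegaZ (k l : ℕ) : Fin (l + 1) → ℤ :=
  fun i => if i = 0 then -((k : ℤ) + 2) else (k : ℤ)

/-- The root system `R^l_k = {v ∈ ℤ^{l+1} : B(v,v) = -2, B(v,ω') = 0}`. -/
def rootSet (k l : ℕ) : Set (Fin (l + 1) → ℤ) :=
  {v | bformZ k l v v = -2 ∧ bformZ k l v (omegaZ k l) = 0}

/-- The image of `R^l_k` inside `ℚ^{l+1}`. -/
def rootSetQ (k l : ℕ) : Set (Fin (l + 1) → ℚ) :=
  (fun (v : Fin (l + 1) → ℤ) (i : Fin (l + 1)) => (v i : ℚ)) '' rootSet k l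

open Finset

/-- The special root `e₀ - (e₁ + ⋯ + e_{k+2})` over `ℤ`. -/
def r0Z (k l : ℕ) : Fin (l + 1) → ℤ := fun i =>
  if i = 0 then 1 else if (i : ℕ) ≤ k + 2 then -1 else 0

/-- The root `e_j - e₁` over `ℤ` (for `j ≥ 2`). -/
def sZ (l : ℕ) (j : Fin (l + 1)) : Fin (l + 1) → ℤ := fun i =>
  if i = j then 1 else if (i : ℕ) = 1 then -1 else 0

lemma card_filter_Icc (l a b : ℕ) (hb : b ≤ l) :
    (Finset.univ.filter (fun i : Fin (l + 1) => a ≤ (i : ℕ) ∧ (i : ℕ) ≤ b)).card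
      = b + 1 - a := by
  rw [← Nat.card_Icc a b]
  refine Finset.card_bij (fun (i : Fin (l + 1)) _ => (i : ℕ)) ?_ ?_ ?_
  · intro i hi; simp only [mem_filter, mem_univ, true_and] at hi
    simp only [Finset.mem_Icc]; omega
  · intro i _ j _ h; exact Fin.val_injective h
  · intro n hn
    simp only [Finset.mem_Icc] at hn
    exact ⟨⟨n, by omega⟩, by simp only [mem_filter, mem_univ, true_and]; exact hn, rfl⟩

lemma sum_sZ_mul (l : ℕ) (j i1 : Fin (l + 1)) (hj : 2 ≤ (j : ℕ)) (h1 : (i1 : ℕ) = 1)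
    (w : Fin (l + 1) → ℤ) :
    ∑ i, sZ l j i * w i = w j - w i1 := by
  have hji : j ≠ i1 := by intro h; rw [h, h1] at hj; omega
  have key : ∀ i, sZ l j i * w i
      = (if i = j then w j else 0) + (if i = i1 then -w i1 else 0) := by
    intro i
    simp only [sZ]
    by_cases hij : i = j
    · rw [hij, if_pos rfl, if_pos rfl, if_neg hji]; ring
    · rw [if_neg hij, if_neg hij]
      by_cases hi1 : i = i1
      · rw [if_pos (by rw [hi1, h1]), if_pos hi1, hi1]; ring
      · rw [if_neg (fun h => hi1 (Fin.val_injective (by rw [h, h1]))), if_neg hi1]; ring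
  rw [Finset.sum_congr rfl (fun i _ => key i), Finset.sum_add_distrib,
    Fintype.sum_ite_eq', Fintype.sum_ite_eq']
  ring

lemma sum_r0Z_mul (k l : ℕ) (w : Fin (l + 1) → ℤ) :
    ∑ i, r0Z k l i * w i
      = w 0 - ∑ i ∈ Finset.univ.filter
          (fun i : Fin (l + 1) => 1 ≤ (i : ℕ) ∧ (i : ℕ) ≤ k + 2), w i := by
  have key : ∀ i : Fin (l + 1), r0Z k l i * w i
      = (if i = 0 then w 0 else 0)
        + (if 1 ≤ (i : ℕ) ∧ (i : ℕ) ≤ k + 2 then -w i else 0) := by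
    intro i
    by_cases hi0 : i = 0
    · subst hi0; simp [r0Z]
    · have hv : 1 ≤ (i : ℕ) := by
        rcases Nat.eq_zero_or_pos (i : ℕ) with h | h
        · exact absurd (Fin.val_injective (by simp [h])) hi0
        · exact h
      by_cases hle : (i : ℕ) ≤ k + 2
      · simp [r0Z, hi0, hle, hv]
      · simp [r0Z, hi0, hle]
  rw [Finset.sum_congr rfl (fun i _ => key i), Finset.sum_add_distrib,
    Fintype.sum_ite_eq', ← Finset.sum_filter]
  rw [Finset.sum_neg_distrib]
  ring

lemma r0Z_mem (k l : ℕ) (hl : k + 2 ≤ l) : r0Z k l ∈ rootSet k l := by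
  have hcard : (Finset.univ.filter
      (fun i : Fin (l + 1) => 1 ≤ (i : ℕ) ∧ (i : ℕ) ≤ k + 2)).card = k + 2 := by
    rw [card_filter_Icc l 1 (k + 2) hl]; omega
  have h0 : r0Z k l 0 = 1 := by simp [r0Z]
  have hF : ∀ i ∈ Finset.univ.filter
      (fun i : Fin (l + 1) => 1 ≤ (i : ℕ) ∧ (i : ℕ) ≤ k + 2),
      i ≠ (0 : Fin (l + 1)) := by
    intro i hi
    simp only [mem_filter, mem_univ, true_and] at hi
    intro h; rw [h] at hi; simp at hi
  constructor
  · have hsum : ∑ i, r0Z k l i * r0Z k l i = 1 + (k + 2 : ℤ) := by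
      rw [sum_r0Z_mul, h0]
      have : ∀ i ∈ Finset.univ.filter
          (fun i : Fin (l + 1) => 1 ≤ (i : ℕ) ∧ (i : ℕ) ≤ k + 2), r0Z k l i = -1 := by
        intro i hi
        have := hF i hi
        simp only [mem_filter, mem_univ, true_and] at hi
        simp [r0Z, this, hi.2]
      rw [Finset.sum_congr rfl this, Finset.sum_const, hcard]
      push_cast; ring
    unfold bformZ
    rw [hsum, h0]; push_cast; ring
  · have hsum : ∑ i, r0Z k l i * omegaZ k l i = -((k : ℤ) + 2) - (k + 2) * k := by
      rw [sum_r0Z_mul]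
      have h1 : omegaZ k l 0 = -((k : ℤ) + 2) := by simp [omegaZ]
      have : ∀ i ∈ Finset.univ.filter
          (fun i : Fin (l + 1) => 1 ≤ (i : ℕ) ∧ (i : ℕ) ≤ k + 2),
          omegaZ k l i = (k : ℤ) := by
        intro i hi; simp [omegaZ, hF i hi]
      rw [Finset.sum_congr rfl this, Finset.sum_const, hcard, h1]
      push_cast; ring
    unfold bformZ
    rw [hsum, h0]
    have : omegaZ k l 0 = -((k : ℤ) + 2) := by simp [omegaZ]
    rw [this]; ring

lemma sZ_mem (k l : ℕ) (j i1 : Fin (l + 1)) (hj : 2 ≤ (j : ℕ)) (h1 : (i1 : ℕ) = 1) :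
    sZ l j ∈ rootSet k l := by
  have hj0 : j ≠ 0 := by intro h; rw [h] at hj; simp at hj
  have hi10 : i1 ≠ 0 := by intro h; rw [h] at h1; simp at h1
  have h00 : sZ l j 0 = 0 := by
    have : (0 : Fin (l + 1)) ≠ j := fun h => hj0 h.symm
    simp [sZ, this]
  constructor
  · have hsum : ∑ i, sZ l j i * sZ l j i = 2 := by
      rw [sum_sZ_mul l j i1 hj h1]
      have hjj : sZ l j j = 1 := by simp [sZ]
      have hii : sZ l j i1 = -1 := by
        have : i1 ≠ j := by intro h; rw [← h, h1] at hj; omega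
        simp [sZ, this, h1]
      rw [hjj, hii]; ring
    unfold bformZ
    rw [hsum, h00]; ring
  · have hsum : ∑ i, sZ l j i * omegaZ k l i = 0 := by
      rw [sum_sZ_mul l j i1 hj h1]
      simp [omegaZ, hj0, hi10]
    unfold bformZ
    rw [hsum, h00]; ring

/-- `ℚ`-version of `r0Z`. -/
def r0Q (k l : ℕ) : Fin (l + 1) → ℚ := fun i =>
  if i = 0 then 1 else if (i : ℕ) ≤ k + 2 then -1 else 0

/-- `ℚ`-version of `sZ`. -/
def sQ (l : ℕ) (j : Fin (l + 1)) : Fin (l + 1) → ℚ := fun i =>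
  if i = j then 1 else if (i : ℕ) = 1 then -1 else 0

lemma r0Q_cast (k l : ℕ) : (fun i => ((r0Z k l i : ℚ))) = r0Q k l := by
  funext i; simp only [r0Z, r0Q]; split_ifs <;> norm_num

lemma sQ_cast (l : ℕ) (j : Fin (l + 1)) : (fun i => ((sZ l j i : ℚ))) = sQ l j := by
  funext i; simp only [sZ, sQ]; split_ifs <;> norm_num

lemma omegaV_cast (k l : ℕ) : omegaV k l = fun i => ((omegaZ k l i : ℚ)) := by
  funext i; simp only [omegaV, omegaZ]; split_ifs <;> push_cast <;> ring

lemma bform_cast (k l : ℕ) (v w : Fin (l + 1) → ℤ) :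
    bform k l (fun i => ((v i : ℚ))) (fun i => ((w i : ℚ))) = ((bformZ k l v w : ℚ)) := by
  simp only [bform, bformZ]
  push_cast
  ring

/-- The linear functional `v ↦ B(v, ω')`. -/
def psiMap (k l : ℕ) : (Fin (l + 1) → ℚ) →ₗ[ℚ] ℚ where
  toFun v := bform k l v (omegaV k l)
  map_add' v w := by
    simp only [bform, Pi.add_apply, add_mul, Finset.sum_add_distrib]
    ring
  map_smul' c v := by
    simp only [bform, Pi.smul_apply, smul_eq_mul, RingHom.id_apply, mul_assoc]
    rw [← Finset.mul_sum]
    ring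

/-- If `k+2 ≤ l` and `l·k < (k+2)²` then the `ℚ`-linear span of `R^l_k` in `ℚ^{l+1}`
is exactly the orthogonal complement of `ω'`; in particular it has dimension `l`. -/
theorem span_rootSet_eq_orthogonal (k l : ℕ) (hk : 1 ≤ k) (hl : k + 2 ≤ l)
    (hdeg : l * k < (k + 2) ^ 2) :
    (Submodule.span ℚ (rootSetQ k l) : Set (Fin (l + 1) → ℚ))
        = {v | bform k l v (omegaV k l) = 0} ∧
      Module.finrank ℚ ↥(Submodule.span ℚ (rootSetQ k l)) = l := by
  classical
  set ψ := psiMap k l with hψdef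
  have hψ : ∀ v, ψ v = bform k l v (omegaV k l) := fun v => rfl
  have hω0 : omegaV k l 0 = -((k : ℚ) + 2) := by simp [omegaV]
  -- roots lie in the kernel of ψ
  have hsub : rootSetQ k l ⊆ (LinearMap.ker ψ : Set _) := by
    rintro _ ⟨v, hv, rfl⟩
    simp only [SetLike.mem_coe, LinearMap.mem_ker]
    rw [hψ, omegaV_cast, bform_cast, hv.2]
    simp
  have h1lt : 1 < l + 1 := by omega
  set i1 : Fin (l + 1) := ⟨1, h1lt⟩ with hi1def
  have h1 : (i1 : ℕ) = 1 := rfl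
  set J : Finset (Fin (l + 1)) := Finset.univ.filter (fun j => 2 ≤ (j : ℕ)) with hJ
  set N : Finset (Fin (l + 1)) := Finset.univ.filter (fun j => 1 ≤ (j : ℕ)) with hN
  have hNJ : N = insert i1 J := by
    ext j
    simp only [hN, hJ, mem_filter, Finset.mem_univ, true_and, Finset.mem_insert]
    constructor
    · intro hj
      by_cases h2 : 2 ≤ (j : ℕ)
      · exact Or.inr h2
      · exact Or.inl (Fin.val_injective (by rw [h1]; omega))
    · rintro (rfl | h2)
      · rw [h1]
      · omega
  have hi1J : i1 ∉ J := by
    simp only [hJ, mem_filter, Finset.mem_univ, true_and, h1]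
    omega
  -- kernel of ψ is contained in the span
  have hker_le : (LinearMap.ker ψ : Set _) ⊆
      (Submodule.span ℚ (rootSetQ k l) : Set (Fin (l + 1) → ℚ)) := by
    intro v hv
    simp only [SetLike.mem_coe, LinearMap.mem_ker] at hv
    rw [hψ] at hv
    have hsum : ∑ i, v i * omegaV k l i
        = v 0 * (-((k : ℚ) + 2)) + (∑ j ∈ N, v j) * (k : ℚ) := by
      have key : ∀ i : Fin (l + 1), v i * omegaV k l i
          = (if i = 0 then v 0 * (-((k : ℚ) + 2)) else 0)
            + (if 1 ≤ (i : ℕ) then v i * (k : ℚ) else 0) := by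
        intro i
        by_cases hi0 : i = 0
        · subst hi0; simp [omegaV]
        · have hv1 : 1 ≤ (i : ℕ) := Nat.one_le_iff_ne_zero.mpr
            (fun h => hi0 (Fin.val_injective (by simp [h])))
          simp [omegaV, hi0, hv1]
      rw [Finset.sum_congr rfl fun i _ => key i, Finset.sum_add_distrib,
        Fintype.sum_ite_eq', ← Finset.sum_filter, ← hN, ← Finset.sum_mul]
    rw [bform, hω0, hsum] at hv
    have hk0 : ((k : ℚ)) ≠ 0 := Nat.cast_ne_zero.mpr (by omega)
    have h2 : (k : ℚ) * (((k : ℚ) + 2) * v 0 + ∑ j ∈ N, v j) = 0 := by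
      linear_combination -hv
    have hC : ((k : ℚ) + 2) * v 0 + ∑ j ∈ N, v j = 0 := by
      rcases mul_eq_zero.mp h2 with h | h
      · exact absurd h hk0
      · exact h
    rw [hNJ, Finset.sum_insert hi1J] at hC
    -- reconstruction of v from the explicit roots
    have hkey : v = v 0 • r0Q k l
        + ∑ j ∈ J, (v j + if (j : ℕ) ≤ k + 2 then v 0 else 0) • sQ l j := by
      funext i
      simp only [Pi.add_apply, Pi.smul_apply, smul_eq_mul, Finset.sum_apply]
      by_cases hi0 : i = 0
      · subst hi0
        have hz : ∀ j ∈ J, (v j + if (j : ℕ) ≤ k + 2 then v 0 else 0) * sQ l j 0 = 0 := by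
          intro j hj
          simp only [hJ, mem_filter, Finset.mem_univ, true_and] at hj
          have h0j : (0 : Fin (l + 1)) ≠ j := by
            intro h; rw [← h] at hj; simp at hj
          simp [sQ, h0j]
        rw [Finset.sum_eq_zero hz]
        simp [r0Q]
      · by_cases hi1' : i = i1
        · subst hi1'
          have hi1ne0 : i1 ≠ 0 := by
            intro h
            have : (i1 : ℕ) = 0 := by rw [h]; rfl
            omega
          have hr0 : r0Q k l i1 = -1 := by
            simp only [r0Q, if_neg hi1ne0, h1]
            rw [if_pos (by omega)]
          have hterm : ∀ j ∈ J, (v j + if (j : ℕ) ≤ k + 2 then v 0 else 0) * sQ l j i1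
              = -(v j + if (j : ℕ) ≤ k + 2 then v 0 else 0) := by
            intro j hj
            simp only [hJ, mem_filter, Finset.mem_univ, true_and] at hj
            have hne : i1 ≠ j := by
              intro h; rw [← h, h1] at hj; omega
            have hq : sQ l j i1 = -1 := by simp [sQ, hne, h1]
            rw [hq]; ring
          rw [Finset.sum_congr rfl hterm, Finset.sum_neg_distrib, Finset.sum_add_distrib]
          have hite : ∑ j ∈ J, (if (j : ℕ) ≤ k + 2 then v 0 else 0)
              = ((k : ℚ) + 1) * v 0 := by
            rw [← Finset.sum_filter, hJ, Finset.filter_filter, Finset.sum_const]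
            have hc : (Finset.univ.filter
                (fun j : Fin (l + 1) => 2 ≤ (j : ℕ) ∧ (j : ℕ) ≤ k + 2)).card = k + 1 := by
              rw [card_filter_Icc l 2 (k + 2) hl]
              omega
            rw [hc, nsmul_eq_mul]
            push_cast
            ring
          rw [hite, hr0]
          linarith [hC]
        · have h0val : (i : ℕ) ≠ 0 := fun h => hi0 (Fin.val_injective (by simp [h]))
          have h1val : (i : ℕ) ≠ 1 := fun h => hi1' (Fin.val_injective (by rw [h, h1]))
          have hival : 2 ≤ (i : ℕ) := by omega
          have hiJ : i ∈ J := by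
            simp only [hJ, mem_filter, Finset.mem_univ, true_and]
            exact hival
          have hsum2 : ∑ j ∈ J, (v j + if (j : ℕ) ≤ k + 2 then v 0 else 0) * sQ l j i
              = v i + if (i : ℕ) ≤ k + 2 then v 0 else 0 := by
            rw [Finset.sum_eq_single i]
            · simp [sQ]
            · intro j _ hji
              have hij : i ≠ j := fun h => hji h.symm
              have : sQ l j i = 0 := by simp [sQ, hij, h1val]
              rw [this, mul_zero]
            · intro h; exact absurd hiJ h
          rw [hsum2]
          simp only [r0Q, if_neg hi0]
          split_ifs with h <;> ring
    rw [hkey]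
    apply Submodule.add_mem
    · exact Submodule.smul_mem _ _
        (Submodule.subset_span ⟨r0Z k l, r0Z_mem k l hl, r0Q_cast k l⟩)
    · refine Submodule.sum_mem _ fun j hj => Submodule.smul_mem _ _
        (Submodule.subset_span ?_)
      have hj2 : 2 ≤ (j : ℕ) := by
        simpa only [hJ, mem_filter, Finset.mem_univ, true_and] using hj
      exact ⟨sZ l j, sZ_mem k l j i1 hj2 h1, sQ_cast l j⟩
  have hspan_eq : Submodule.span ℚ (rootSetQ k l) = LinearMap.ker ψ := by
    apply le_antisymm
    · exact Submodule.span_le.mpr hsub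
    · intro v hv; exact hker_le hv
  -- value of ψ on e₀
  set e0 : Fin (l + 1) → ℚ := fun i => if i = 0 then 1 else 0 with he0
  have hval : ψ e0 = -((k : ℚ) * ((k : ℚ) + 2)) := by
    rw [hψ]
    have hs : ∑ i, e0 i * omegaV k l i = -((k : ℚ) + 2) := by
      have key : ∀ i : Fin (l + 1), e0 i * omegaV k l i
          = if i = 0 then -((k : ℚ) + 2) else 0 := by
        intro i
        by_cases hi : i = 0
        · subst hi; simp [he0, omegaV]
        · simp [he0, hi]
      rw [Finset.sum_congr rfl fun i _ => key i, Fintype.sum_ite_eq']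
    have h00 : e0 0 = 1 := by simp [he0]
    rw [bform, hs, h00, hω0]
    ring
  have hkpos : (0 : ℚ) < (k : ℚ) := by exact_mod_cast (by omega : 0 < k)
  have hne : ψ e0 ≠ 0 := by
    rw [hval]
    have : (0 : ℚ) < (k : ℚ) * ((k : ℚ) + 2) := by nlinarith
    exact neg_ne_zero.mpr (ne_of_gt this)
  have hrange : LinearMap.range ψ = ⊤ := by
    rw [LinearMap.range_eq_top]
    intro c
    refine ⟨(c / ψ e0) • e0, ?_⟩
    rw [map_smul, smul_eq_mul, div_mul_cancel₀ _ hne]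
  have hfr := LinearMap.finrank_range_add_finrank_ker ψ
  rw [hrange, finrank_top] at hfr
  have hpi : Module.finrank ℚ (Fin (l + 1) → ℚ) = l + 1 := by
    rw [Module.finrank_pi ℚ]
    simp
  have hself : Module.finrank ℚ ℚ = 1 := Module.finrank_self ℚ
  constructor
  · rw [hspan_eq]
    ext v
    simp only [SetLike.mem_coe, LinearMap.mem_ker, Set.mem_setOf_eq]
    exact Iff.rfl
  · rw [hspan_eq]
    rw [hpi, hself] at hfr
    omega
end

section
/- Let k ≥ 1 be an integer and set l = k+2. Let Q be the additive subgroup of ℚ^{l+1} generated by R^{k+2}_k, and let P = {x ∈ ℚ^{l+1} : B(x, ω') = 0 and B(x, m) ∈ ℤ for every m ∈ R^{k+2}_k}. Then Q ⊆ P and the quotient group P/Q is finite of order 2(k+2) (the index of connectedness of the root system A_{k+1} × A₁). -/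
/-- Coercion of an integral vector to a rational vector. -/
def ratOf (l : ℕ) (v : Fin (l + 1) → ℤ) : Fin (l + 1) → ℚ :=
  fun i => (v i : ℚ)

/-- The root lattice `Q`: the additive subgroup of `ℚ^{l+1}` generated by `R^l_k`. -/
def rootLattice (k l : ℕ) : AddSubgroup (Fin (l + 1) → ℚ) :=
  AddSubgroup.closure (ratOf l '' rootSet k l)

/-- The weight lattice `P = {x ∈ ℚ^{l+1} : B(x,ω') = 0 and B(x,m) ∈ ℤ for all m ∈ R^l_k}`. -/
def weightLattice (k l : ℕ) : Set (Fin (l + 1) → ℚ) :=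
  {x | bform k l x (omegaV k l) = 0 ∧
    ∀ m ∈ rootSet k l, ∃ n : ℤ, bform k l x (ratOf l m) = (n : ℚ)}

namespace Aux
/-- the index set `{1,…,l}` -/
def E0 (k : ℕ) : Finset (Fin (k + 2 + 1)) := Finset.univ.erase 0

lemma card_E0 (k : ℕ) : (E0 k).card = k + 2 := by
  simp [E0, Finset.card_erase_of_mem]

lemma sum_split (k : ℕ) (f : Fin (k + 2 + 1) → ℚ) :
    ∑ i, f i = f 0 + ∑ i ∈ E0 k, f i :=
  (Finset.add_sum_erase _ f (Finset.mem_univ 0)).symm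

lemma sum_splitZ (k : ℕ) (f : Fin (k + 2 + 1) → ℤ) :
    ∑ i, f i = f 0 + ∑ i ∈ E0 k, f i :=
  (Finset.add_sum_erase _ f (Finset.mem_univ 0)).symm

lemma bform_eval (k : ℕ) (x y : Fin (k + 2 + 1) → ℚ) :
    bform k (k + 2) x y = (k : ℚ) * (x 0 * y 0) - ∑ i ∈ E0 k, x i * y i := by
  unfold bform; rw [sum_split]; ring

lemma bformZ_eval (k : ℕ) (x y : Fin (k + 2 + 1) → ℤ) :
    bformZ k (k + 2) x y = (k : ℤ) * (x 0 * y 0) - ∑ i ∈ E0 k, x i * y i := by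
  unfold bformZ; rw [sum_splitZ]; ring

lemma bform_ratOf (k l : ℕ) (v w : Fin (l + 1) → ℤ) :
    bform k l (ratOf l v) (ratOf l w) = (bformZ k l v w : ℚ) := by
  unfold bform bformZ ratOf; push_cast; ring

lemma ratOf_omega (k l : ℕ) : ratOf l (omegaZ k l) = omegaV k l := by
  funext i; by_cases h : i = 0 <;> simp [ratOf, omegaZ, omegaV, h]

lemma bform_add_left (k l : ℕ) (x y w : Fin (l + 1) → ℚ) :
    bform k l (x + y) w = bform k l x w + bform k l y w := by
  unfold bform; simp [add_mul, Finset.sum_add_distrib]; ring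

lemma bform_neg_left (k l : ℕ) (x w : Fin (l + 1) → ℚ) :
    bform k l (-x) w = -bform k l x w := by
  unfold bform; simp [Finset.sum_neg_distrib]; ring

lemma bform_zero_left (k l : ℕ) (w : Fin (l + 1) → ℚ) :
    bform k l 0 w = 0 := by
  simp [bform]

/-- the constraint functional -/
def T (k : ℕ) (x : Fin (k + 2 + 1) → ℚ) : ℚ :=
  ((k : ℚ) + 2) * x 0 + ∑ i ∈ E0 k, x i

lemma bform_omega (k : ℕ) (x : Fin (k + 2 + 1) → ℚ) :
    bform k (k + 2) x (omegaV k (k + 2)) = -(k : ℚ) * T k x := by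
  have h : ∑ i ∈ E0 k, x i * omegaV k (k + 2) i = (∑ i ∈ E0 k, x i) * (k : ℚ) := by
    rw [Finset.sum_mul]
    exact Finset.sum_congr rfl fun i hi => by
      simp [omegaV, Finset.ne_of_mem_erase hi]
  rw [bform_eval, h]
  simp only [omegaV, T, if_pos, if_true, eq_self_iff_true]
  ring
end Aux
namespace Aux
def i1 (k : ℕ) : Fin (k + 2 + 1) := ⟨1, by omega⟩
def i2 (k : ℕ) : Fin (k + 2 + 1) := ⟨2, by omega⟩

lemma i1_ne_zero (k : ℕ) : i1 k ≠ 0 := by simp [i1, Fin.ext_iff]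
lemma i2_ne_zero (k : ℕ) : i2 k ≠ 0 := by simp [i2, Fin.ext_iff]
lemma i2_ne_i1 (k : ℕ) : i2 k ≠ i1 k := by simp [i1, i2, Fin.ext_iff]
lemma i1_mem_E0 (k : ℕ) : i1 k ∈ E0 k := by
  simp [E0, i1_ne_zero]
lemma mem_E0 (k : ℕ) {i : Fin (k + 2 + 1)} (h : i ≠ 0) : i ∈ E0 k := by simp [E0, h]

def deltaZ (k : ℕ) : Fin (k + 2 + 1) → ℤ := fun i => if i = 0 then 1 else -1
def vijZ (k : ℕ) (i j : Fin (k + 2 + 1)) : Fin (k + 2 + 1) → ℤ :=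
  fun m => (if m = i then 1 else 0) - (if m = j then 1 else 0)

lemma deltaZ_mem (k : ℕ) : deltaZ k ∈ rootSet k (k + 2) := by
  constructor
  · rw [bformZ_eval]
    have h : ∑ i ∈ E0 k, deltaZ k i * deltaZ k i = (k + 2 : ℤ) := by
      rw [Finset.sum_congr rfl (fun i hi => by
        simp [deltaZ, Finset.ne_of_mem_erase hi] : ∀ i ∈ E0 k,
          deltaZ k i * deltaZ k i = 1)]
      simp [card_E0]
    rw [h]; simp [deltaZ]
  · rw [bformZ_eval]
    have h : ∑ i ∈ E0 k, deltaZ k i * omegaZ k (k + 2) i = -((k : ℤ) * (k + 2)) := by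
      rw [Finset.sum_congr rfl (fun i hi => by
        simp [deltaZ, omegaZ, Finset.ne_of_mem_erase hi] : ∀ i ∈ E0 k,
          deltaZ k i * omegaZ k (k + 2) i = -(k : ℤ))]
      simp [card_E0]; ring
    rw [h]; simp [deltaZ, omegaZ]; ring

lemma vijZ_mem (k : ℕ) (i j : Fin (k + 2 + 1)) (hi : i ≠ 0) (hj : j ≠ 0)
    (hij : i ≠ j) : vijZ k i j ∈ rootSet k (k + 2) := by
  have hsq : ∀ m, vijZ k i j m * vijZ k i j m =
      (if m = i then 1 else 0) + (if m = j then 1 else 0) := by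
    intro m
    by_cases h1 : m = i <;> by_cases h2 : m = j <;>
      simp [vijZ, h1, h2] <;> simp_all
  constructor
  · rw [bformZ_eval]
    have h0 : vijZ k i j 0 = 0 := by
      simp [vijZ, (Ne.symm hi), (Ne.symm hj)]
    have h : ∑ m ∈ E0 k, vijZ k i j m * vijZ k i j m = 2 := by
      rw [Finset.sum_congr rfl fun m _ => hsq m, Finset.sum_add_distrib,
        Finset.sum_ite_eq' (E0 k) i, Finset.sum_ite_eq' (E0 k) j,
        if_pos (mem_E0 k hi), if_pos (mem_E0 k hj)]
      norm_num
    rw [h, h0]; ring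
  · rw [bformZ_eval]
    have h0 : vijZ k i j 0 = 0 := by
      simp [vijZ, (Ne.symm hi), (Ne.symm hj)]
    have h : ∑ m ∈ E0 k, vijZ k i j m * omegaZ k (k + 2) m = 0 := by
      have : ∀ m ∈ E0 k, vijZ k i j m * omegaZ k (k + 2) m =
          (if m = i then (k : ℤ) else 0) - (if m = j then (k : ℤ) else 0) := by
        intro m hm
        simp only [vijZ, omegaZ, if_neg (Finset.ne_of_mem_erase hm)]
        by_cases h1 : m = i <;> by_cases h2 : m = j <;> simp [h1, h2] <;> simp_all
      rw [Finset.sum_congr rfl this, Finset.sum_sub_distrib,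
        Finset.sum_ite_eq' (E0 k) i, Finset.sum_ite_eq' (E0 k) j,
        if_pos (mem_E0 k hi), if_pos (mem_E0 k hj), sub_self]
    rw [h, h0]; ring
end Aux
namespace Aux
/-- half of the `A₁`-root `δ` -/
noncomputable def hd (k : ℕ) : Fin (k + 2 + 1) → ℚ :=
  fun i => if i = 0 then 1/2 else -(1/2)
/-- a fundamental weight of the `A_{k+1}` part -/
noncomputable def mu (k : ℕ) : Fin (k + 2 + 1) → ℚ :=
  fun i => if i = 0 then 0 else if i = i1 k then 1 - 1/((k : ℚ) + 2) else -(1/((k : ℚ) + 2))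

lemma sum_hd_mul (k : ℕ) (y : Fin (k + 2 + 1) → ℚ) :
    ∑ i ∈ E0 k, hd k i * y i = -(1/2) * ∑ i ∈ E0 k, y i := by
  rw [Finset.mul_sum]
  exact Finset.sum_congr rfl fun i hi => by
    simp [hd, Finset.ne_of_mem_erase hi]

lemma sum_mu_mul (k : ℕ) (y : Fin (k + 2 + 1) → ℚ) :
    ∑ i ∈ E0 k, mu k i * y i = -(1/((k : ℚ) + 2)) * ∑ i ∈ E0 k, y i + y (i1 k) := by
  have h : ∀ i ∈ E0 k, mu k i * y i =
      -(1/((k : ℚ) + 2)) * y i + (if i = i1 k then y i else 0) := by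
    intro i hi
    by_cases h1 : i = i1 k <;>
      simp [mu, Finset.ne_of_mem_erase hi, h1, i1_ne_zero k] <;> ring
  rw [Finset.sum_congr rfl h, Finset.sum_add_distrib, ← Finset.mul_sum,
    Finset.sum_ite_eq' (E0 k) (i1 k) y, if_pos (i1_mem_E0 k)]

lemma T_hd (k : ℕ) : T k (hd k) = 0 := by
  have : ∑ i ∈ E0 k, hd k i = -(1/2) * (k + 2 : ℚ) := by
    rw [Finset.sum_congr rfl (fun i hi => by
      simp [hd, Finset.ne_of_mem_erase hi] : ∀ i ∈ E0 k, hd k i = -(1/2))]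
    simp [card_E0]; push_cast; ring
  unfold T
  rw [this]
  simp [hd]; ring

lemma T_mu (k : ℕ) : T k (mu k) = 0 := by
  have h2 : (0:ℚ) < (k:ℚ) + 2 := by positivity
  have h1 : ∑ i ∈ E0 k, mu k i * 1 = -(1/((k : ℚ) + 2)) * ∑ i ∈ E0 k, (1:ℚ) + 1 := by
    simpa using sum_mu_mul k (fun _ => 1)
  have : ∑ i ∈ E0 k, mu k i = 0 := by
    simp only [mul_one] at h1
    rw [h1]
    rw [Finset.sum_const, card_E0]
    field_simp
    ring
  unfold T
  rw [this]
  simp [mu]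

lemma hd_mem (k : ℕ) (hk : 1 ≤ k) : hd k ∈ weightLattice k (k + 2) := by
  constructor
  · rw [bform_omega, T_hd]; ring
  · intro m hm
    refine ⟨-(m 0), ?_⟩
    have hc : ((k : ℚ) + 2) * (ratOf (k+2) m) 0 + ∑ i ∈ E0 k, (ratOf (k+2) m) i = 0 := by
      have h1 : bform k (k + 2) (ratOf (k+2) m) (omegaV k (k + 2)) = 0 := by
        rw [← ratOf_omega k (k+2), bform_ratOf, hm.2]; norm_num
      rw [bform_omega] at h1
      have hk' : (k : ℚ) ≠ 0 := Nat.cast_ne_zero.mpr (by omega)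
      rcases mul_eq_zero.mp h1 with h | h
      · exact absurd h (by simpa using hk')
      · simpa [T] using h
    rw [bform_eval, sum_hd_mul]
    have hsum : ∑ i ∈ E0 k, (ratOf (k+2) m) i = -(((k : ℚ) + 2) * (ratOf (k+2) m) 0) := by
      linarith
    rw [hsum]
    simp only [hd, if_pos rfl, ratOf]
    push_cast
    ring

lemma mu_mem (k : ℕ) (hk : 1 ≤ k) : mu k ∈ weightLattice k (k + 2) := by
  constructor
  · rw [bform_omega, T_mu]; ring
  · intro m hm
    refine ⟨-(m (i1 k)) - m 0, ?_⟩
    have hc : ((k : ℚ) + 2) * (ratOf (k+2) m) 0 + ∑ i ∈ E0 k, (ratOf (k+2) m) i = 0 := by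
      have h1 : bform k (k + 2) (ratOf (k+2) m) (omegaV k (k + 2)) = 0 := by
        rw [← ratOf_omega k (k+2), bform_ratOf, hm.2]; norm_num
      rw [bform_omega] at h1
      have hk' : (k : ℚ) ≠ 0 := Nat.cast_ne_zero.mpr (by omega)
      rcases mul_eq_zero.mp h1 with h | h
      · exact absurd h (by simpa using hk')
      · simpa [T] using h
    rw [bform_eval, sum_mu_mul]
    have hsum : ∑ i ∈ E0 k, (ratOf (k+2) m) i = -(((k : ℚ) + 2) * (ratOf (k+2) m) 0) := by
      linarith
    rw [hsum]
    have h2 : ((k:ℚ) + 2) ≠ 0 := by positivity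
    simp only [mu, if_pos rfl, ratOf]
    push_cast
    field_simp
    ring
end Aux
namespace Aux
/-- the weight lattice as a subgroup -/
def W (k l : ℕ) : AddSubgroup (Fin (l + 1) → ℚ) where
  carrier := weightLattice k l
  zero_mem' := ⟨bform_zero_left k l _, fun m _ => ⟨0, by rw [bform_zero_left]; norm_num⟩⟩
  add_mem' := by
    rintro a b ⟨ha1, ha2⟩ ⟨hb1, hb2⟩
    refine ⟨by rw [bform_add_left, ha1, hb1]; ring, fun m hm => ?_⟩
    obtain ⟨na, hna⟩ := ha2 m hm
    obtain ⟨nb, hnb⟩ := hb2 m hm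
    exact ⟨na + nb, by rw [bform_add_left, hna, hnb]; push_cast; ring⟩
  neg_mem' := by
    rintro a ⟨ha1, ha2⟩
    refine ⟨by rw [bform_neg_left, ha1]; ring, fun m hm => ?_⟩
    obtain ⟨na, hna⟩ := ha2 m hm
    exact ⟨-na, by rw [bform_neg_left, hna]; push_cast; ring⟩

lemma rootLattice_le_W (k l : ℕ) : rootLattice k l ≤ W k l := by
  rw [rootLattice, AddSubgroup.closure_le]
  rintro x ⟨m, hm, rfl⟩
  refine ⟨?_, fun m' _ => ⟨bformZ k l m m', (bform_ratOf k l m m').symm ▸ rfl⟩⟩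
  rw [← ratOf_omega k l, bform_ratOf, hm.2]
  norm_num

/-- the lattice of integer vectors -/
def L (l : ℕ) : AddSubgroup (Fin (l + 1) → ℚ) where
  carrier := {x | ∀ i, ∃ m : ℤ, x i = (m : ℚ)}
  zero_mem' := fun i => ⟨0, by norm_num⟩
  add_mem' := by
    intro a b ha hb i
    obtain ⟨ma, hma⟩ := ha i
    obtain ⟨mb, hmb⟩ := hb i
    exact ⟨ma + mb, by simp [hma, hmb]⟩
  neg_mem' := by
    intro a ha i
    obtain ⟨ma, hma⟩ := ha i
    exact ⟨-ma, by simp [hma]⟩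

lemma rootLattice_le_L (k l : ℕ) : rootLattice k l ≤ L l := by
  rw [rootLattice, AddSubgroup.closure_le]
  rintro x ⟨m, _, rfl⟩ i
  exact ⟨m i, rfl⟩

lemma weight_T (k : ℕ) (hk : 1 ≤ k) (x : Fin (k + 2 + 1) → ℚ)
    (hx : x ∈ weightLattice k (k + 2)) : T k x = 0 := by
  have h1 := hx.1
  rw [bform_omega] at h1
  rcases mul_eq_zero.mp h1 with h | h
  · have hk' : (k : ℚ) ≠ 0 := Nat.cast_ne_zero.mpr (by omega)
    exact absurd h (by simpa using hk')
  · exact h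

lemma weight_two_x0 (k : ℕ) (hk : 1 ≤ k) (x : Fin (k + 2 + 1) → ℚ)
    (hx : x ∈ weightLattice k (k + 2)) : ∃ m : ℤ, 2 * x 0 = (m : ℚ) := by
  obtain ⟨n, hn⟩ := hx.2 (deltaZ k) (deltaZ_mem k)
  refine ⟨-n, ?_⟩
  have hT := weight_T k hk x hx
  rw [bform_eval] at hn
  have hsum : ∑ i ∈ E0 k, x i * ratOf (k+2) (deltaZ k) i = -∑ i ∈ E0 k, x i := by
    rw [← Finset.sum_neg_distrib]
    exact Finset.sum_congr rfl fun i hi => by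
      simp [ratOf, deltaZ, Finset.ne_of_mem_erase hi]
  rw [hsum] at hn
  have h0 : ratOf (k+2) (deltaZ k) 0 = 1 := by simp [ratOf, deltaZ]
  rw [h0] at hn
  unfold T at hT
  push_cast
  linarith

lemma weight_diff (k : ℕ) (x : Fin (k + 2 + 1) → ℚ)
    (hx : x ∈ weightLattice k (k + 2)) (i : Fin (k + 2 + 1)) (hi : i ≠ 0) :
    ∃ m : ℤ, x i - x (i1 k) = (m : ℚ) := by
  by_cases h1 : i = i1 k
  · exact ⟨0, by simp [h1]⟩
  obtain ⟨n, hn⟩ := hx.2 (vijZ k i (i1 k)) (vijZ_mem k i (i1 k) hi (i1_ne_zero k) h1)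
  refine ⟨-n, ?_⟩
  rw [bform_eval] at hn
  have h0 : ratOf (k+2) (vijZ k i (i1 k)) 0 = 0 := by
    simp [ratOf, vijZ, Ne.symm hi, Ne.symm (i1_ne_zero k)]
  have hsum : ∑ m ∈ E0 k, x m * ratOf (k+2) (vijZ k i (i1 k)) m = x i - x (i1 k) := by
    have h : ∀ m ∈ E0 k, x m * ratOf (k+2) (vijZ k i (i1 k)) m =
        (if m = i then x m else 0) - (if m = i1 k then x m else 0) := by
      intro m hm
      by_cases e1 : m = i <;> by_cases e2 : m = i1 k <;>
        simp [ratOf, vijZ, e1, e2] <;> simp_all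
    rw [Finset.sum_congr rfl h, Finset.sum_sub_distrib,
      Finset.sum_ite_eq' (E0 k) i x, Finset.sum_ite_eq' (E0 k) (i1 k) x,
      if_pos (mem_E0 k hi), if_pos (i1_mem_E0 k)]
  rw [hsum, h0] at hn
  push_cast
  linarith
end Aux
namespace Aux
lemma mem_rootLattice (k : ℕ) (v : Fin (k + 2 + 1) → ℚ)
    (hint : ∀ i, ∃ m : ℤ, v i = (m : ℚ)) (hT : T k v = 0) :
    v ∈ rootLattice k (k + 2) := by
  choose a ha using hint
  have hv : v = ratOf (k + 2) a := funext fun i => ha i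
  have hsum : ((k : ℚ) + 2) * (a 0 : ℚ) + ∑ i ∈ E0 k, (a i : ℚ) = 0 := by
    unfold T at hT
    rw [hv] at hT
    simpa [ratOf] using hT
  have hzero : ∑ i ∈ E0 k, ((a i + a 0 : ℤ) : ℚ) = 0 := by
    push_cast
    rw [Finset.sum_add_distrib, Finset.sum_const, card_E0, nsmul_eq_mul]
    push_cast
    linarith
  have key : ratOf (k + 2) a = (a 0) • ratOf (k + 2) (deltaZ k) +
      ∑ i ∈ E0 k, (a i + a 0) • ratOf (k + 2) (vijZ k i (i1 k)) := by
    funext m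
    simp only [Pi.add_apply, Finset.sum_apply, Pi.smul_apply]
    by_cases hm0 : m = 0
    · subst hm0
      have hterm : ∀ i ∈ E0 k,
          (a i + a 0) • ratOf (k + 2) (vijZ k i (i1 k)) 0 = 0 := by
        intro i hi
        simp [ratOf, vijZ, Ne.symm (Finset.ne_of_mem_erase hi), Ne.symm (i1_ne_zero k)]
      rw [Finset.sum_congr rfl hterm]
      simp [ratOf, deltaZ]
    · by_cases hm1 : m = i1 k
      · subst hm1
        have hterm : ∀ i ∈ E0 k,
            (a i + a 0) • ratOf (k + 2) (vijZ k i (i1 k)) (i1 k) =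
            (if i1 k = i then ((a i + a 0 : ℤ) : ℚ) else 0) - ((a i + a 0 : ℤ) : ℚ) := by
          intro i hi
          by_cases h1 : i1 k = i
          · rw [if_pos h1]
            simp [ratOf, vijZ, h1]
          · rw [if_neg h1]
            simp [ratOf, vijZ, h1]
        rw [Finset.sum_congr rfl hterm, Finset.sum_sub_distrib,
          Finset.sum_ite_eq (E0 k) (i1 k) (fun i => ((a i + a 0 : ℤ) : ℚ)),
          if_pos (i1_mem_E0 k), hzero]
        simp [ratOf, deltaZ, i1_ne_zero k]
      · have hterm : ∀ i ∈ E0 k,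
            (a i + a 0) • ratOf (k + 2) (vijZ k i (i1 k)) m =
            (if m = i then ((a i + a 0 : ℤ) : ℚ) else 0) := by
          intro i hi
          by_cases h1 : m = i
          · rw [if_pos h1]
            subst h1
            simp [ratOf, vijZ, hm1]
          · rw [if_neg h1]
            simp [ratOf, vijZ, h1, hm1]
        rw [Finset.sum_congr rfl hterm,
          Finset.sum_ite_eq (E0 k) m (fun i => ((a i + a 0 : ℤ) : ℚ)),
          if_pos (mem_E0 k hm0)]
        simp [ratOf, deltaZ, hm0]
  rw [hv, key]
  refine add_mem (zsmul_mem (AddSubgroup.subset_closure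
    (Set.mem_image_of_mem _ (deltaZ_mem k))) _) ?_
  refine AddSubgroup.sum_mem _ fun i hi => ?_
  by_cases h1 : i = i1 k
  · have h0 : ratOf (k + 2) (vijZ k i (i1 k)) = 0 := by
      funext m; simp [ratOf, vijZ, h1]
    rw [h0, smul_zero]
    exact zero_mem _
  · exact zsmul_mem (AddSubgroup.subset_closure (Set.mem_image_of_mem _
      (vijZ_mem k i (i1 k) (Finset.ne_of_mem_erase hi) (i1_ne_zero k) h1))) _
end Aux
namespace Aux
lemma T_sub (k : ℕ) (x y : Fin (k + 2 + 1) → ℚ) : T k (x - y) = T k x - T k y := by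
  unfold T
  simp [Finset.sum_sub_distrib]
  ring

lemma T_add (k : ℕ) (x y : Fin (k + 2 + 1) → ℚ) : T k (x + y) = T k x + T k y := by
  unfold T
  simp [Finset.sum_add_distrib]
  ring

lemma T_nsmul (k : ℕ) (n : ℕ) (x : Fin (k + 2 + 1) → ℚ) : T k (n • x) = (n : ℚ) * T k x := by
  unfold T
  simp [nsmul_eq_mul, mul_add, Finset.mul_sum]
  ring

lemma hd_zero (k : ℕ) : hd k 0 = 1/2 := by simp [hd]
lemma hd_ne (k : ℕ) {i : Fin (k + 2 + 1)} (h : i ≠ 0) : hd k i = -(1/2) := by simp [hd, h]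
lemma mu_zero (k : ℕ) : mu k 0 = 0 := by simp [mu]
lemma mu_i1 (k : ℕ) : mu k (i1 k) = 1 - 1/((k : ℚ) + 2) := by
  simp [mu, i1_ne_zero k]
lemma mu_ne (k : ℕ) {i : Fin (k + 2 + 1)} (h : i ≠ 0) (h' : i ≠ i1 k) :
    mu k i = -(1/((k : ℚ) + 2)) := by simp [mu, h, h']

/-- the parametrisation of `P/Q` -/
noncomputable def gmap (k : ℕ) (p : Fin 2 × Fin (k + 2)) :
    (Fin (k + 2 + 1) → ℚ) ⧸ rootLattice k (k + 2) :=
  QuotientAddGroup.mk ((p.1 : ℕ) • hd k + (p.2 : ℕ) • mu k)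

lemma gmap_injective (k : ℕ) : Function.Injective (gmap k) := by
  intro p p' h
  have hmem : -((p.1 : ℕ) • hd k + (p.2 : ℕ) • mu k) +
      ((p'.1 : ℕ) • hd k + (p'.2 : ℕ) • mu k) ∈ rootLattice k (k + 2) :=
    QuotientAddGroup.eq.mp h
  have hL := rootLattice_le_L k (k + 2) hmem
  have hs : (p.1 : ℕ) = (p'.1 : ℕ) := by
    obtain ⟨m, hm⟩ := hL 0
    simp only [Pi.add_apply, Pi.neg_apply, Pi.smul_apply] at hm
    simp only [nsmul_eq_mul, hd_zero, mu_zero] at hm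
    have h2 : ((p'.1 : ℕ) : ℚ) - ((p.1 : ℕ) : ℚ) = 2 * m := by linarith
    have h3 : ((p'.1 : ℕ) : ℤ) - ((p.1 : ℕ) : ℤ) = 2 * m := by exact_mod_cast h2
    have h4 := p.1.2
    have h5 := p'.1.2
    omega
  have ht : (p.2 : ℕ) = (p'.2 : ℕ) := by
    obtain ⟨m, hm⟩ := hL (i2 k)
    simp only [Pi.add_apply, Pi.neg_apply, Pi.smul_apply] at hm
    simp only [nsmul_eq_mul, hd_ne k (i2_ne_zero k),
      mu_ne k (i2_ne_zero k) (i2_ne_i1 k)] at hm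
    rw [hs] at hm
    have hne : ((k : ℚ) + 2) ≠ 0 := by positivity
    have h2 : ((p.2 : ℕ) : ℚ) - ((p'.2 : ℕ) : ℚ) = ((k : ℚ) + 2) * m := by
      field_simp at hm
      linarith
    have h3 : ((p.2 : ℕ) : ℤ) - ((p'.2 : ℕ) : ℤ) = ((k : ℤ) + 2) * m := by
      exact_mod_cast h2
    have hzero : ((p.2 : ℕ) : ℤ) - ((p'.2 : ℕ) : ℤ) = 0 := by
      refine Int.eq_zero_of_abs_lt_dvd ⟨m, h3⟩ ?_
      have h4 := p.2.2
      have h5 := p'.2.2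
      rw [abs_lt]
      constructor <;> push_cast <;> omega
    omega
  exact Prod.ext (Fin.ext hs) (Fin.ext ht)
end Aux
namespace Aux
lemma image_eq (k : ℕ) (hk : 1 ≤ k) :
    ((QuotientAddGroup.mk : (Fin (k + 2 + 1) → ℚ) →
        (Fin (k + 2 + 1) → ℚ) ⧸ rootLattice k (k + 2)) '' weightLattice k (k + 2)) =
      Set.range (gmap k) := by
  apply Set.Subset.antisymm
  · rintro y ⟨x, hx, rfl⟩
    -- set up the data
    have hT : T k x = 0 := weight_T k hk x hx
    obtain ⟨m0, hm0⟩ := weight_two_x0 k hk x hx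
    have hcex : ∀ i : Fin (k + 2 + 1), ∃ m : ℤ, i ≠ 0 → x i - x (i1 k) = (m : ℚ) := by
      intro i
      by_cases h : i = 0
      · exact ⟨0, fun h' => absurd h h'⟩
      · exact (weight_diff k x hx i h).imp fun m hm _ => hm
    choose c hc using hcex
    set C : ℤ := ∑ i ∈ E0 k, c i with hC
    have hKey : ((k : ℚ) + 2) * (x (i1 k) + x 0) = -(C : ℚ) := by
      have hsx : ∑ i ∈ E0 k, x i = ((k : ℚ) + 2) * x (i1 k) + (C : ℚ) := by
        have hterm : ∀ i ∈ E0 k, x i = x (i1 k) + (c i : ℚ) := by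
          intro i hi
          have := hc i (Finset.ne_of_mem_erase hi)
          linarith
        rw [Finset.sum_congr rfl hterm, Finset.sum_add_distrib, Finset.sum_const,
          card_E0, nsmul_eq_mul, hC]
        push_cast
        ring
      have hTx : ((k : ℚ) + 2) * x 0 + ∑ i ∈ E0 k, x i = 0 := hT
      rw [hsx] at hTx
      linarith
    -- choose the residues
    set s : ℕ := (m0 % 2).toNat with hsdef
    have hs2 : s < 2 := by
      have := Int.emod_lt_of_pos m0 (by norm_num : (0:ℤ) < 2)
      have := Int.emod_nonneg m0 (by norm_num : (2:ℤ) ≠ 0)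
      omega
    have hsZ : (s : ℤ) = m0 % 2 := by
      have := Int.emod_nonneg m0 (by norm_num : (2:ℤ) ≠ 0)
      omega
    set t : ℕ := (C % ((k : ℤ) + 2)).toNat with htdef
    have hn0 : (0:ℤ) < (k : ℤ) + 2 := by positivity
    have ht2 : t < k + 2 := by
      have := Int.emod_lt_of_pos C hn0
      have := Int.emod_nonneg C hn0.ne'
      omega
    have htZ : (t : ℤ) = C % ((k : ℤ) + 2) := by
      have := Int.emod_nonneg C hn0.ne'
      omega
    set p : ℤ := m0 / 2 with hpdef
    have hp : m0 % 2 + 2 * p = m0 := Int.emod_add_mul_ediv m0 2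
    set q : ℤ := -(C / ((k : ℤ) + 2)) with hqdef
    have hq : (t : ℤ) - C = ((k : ℤ) + 2) * q := by
      have h := Int.emod_add_mul_ediv C ((k : ℤ) + 2)
      rw [htZ, hqdef]
      linear_combination h
    -- basic coordinate facts
    rw [← hsZ] at hp
    have hx0 : x 0 - (s : ℚ)/2 = (p : ℚ) := by
      have hp' : ((s : ℕ) : ℚ) + 2 * (p : ℚ) = (m0 : ℚ) := by exact_mod_cast hp
      linarith [hm0]
    have hne : ((k : ℚ) + 2) ≠ 0 := by positivity
    have hqQ : (t : ℚ) - (C : ℚ) = ((k : ℚ) + 2) * (q : ℚ) := by exact_mod_cast hq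
    have hmainM : ((k : ℚ) + 2) * (x (i1 k) + (s : ℚ)/2) + (t : ℚ) =
        ((k : ℚ) + 2) * ((q : ℚ) - (p : ℚ)) := by
      linear_combination hKey + hqQ - ((k : ℚ) + 2) * hx0
    have hmain : x (i1 k) + (s : ℚ)/2 + (t : ℚ)/((k : ℚ) + 2) = (q : ℚ) - (p : ℚ) := by
      have h2 : ((k : ℚ) + 2) * (x (i1 k) + (s : ℚ)/2 + (t : ℚ)/((k : ℚ) + 2)) =
          ((k : ℚ) + 2) * ((q : ℚ) - (p : ℚ)) := by
        rw [mul_add, mul_div_cancel₀ _ hne]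
        linear_combination hmainM
      exact mul_left_cancel₀ hne h2
    -- the difference is in the root lattice
    set w : Fin (k + 2 + 1) → ℚ := x - ((s • hd k) + (t • mu k)) with hwdef
    have hwmem : w ∈ rootLattice k (k + 2) := by
      apply mem_rootLattice
      · intro i
        have hwi : w i = x i - (s : ℚ) * hd k i - (t : ℚ) * mu k i := by
          simp [hwdef, nsmul_eq_mul]
          ring
        by_cases h0 : i = 0
        · refine ⟨p, ?_⟩
          rw [hwi, h0, hd_zero, mu_zero]
          rw [mul_zero, sub_zero]
          linarith [hx0]
        · by_cases h1 : i = i1 k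
          · refine ⟨q - p - t, ?_⟩
            rw [hwi, h1, hd_ne k (i1_ne_zero k), mu_i1]
            push_cast
            linear_combination hmain
          · refine ⟨c i + q - p, ?_⟩
            rw [hwi, hd_ne k h0, mu_ne k h0 h1]
            have hci := hc i h0
            push_cast
            linear_combination hmain + hci
      · rw [hwdef, T_sub, T_add, T_nsmul, T_nsmul, T_hd, T_mu, hT]
        ring
    refine ⟨(⟨s, hs2⟩, ⟨t, ht2⟩), ?_⟩
    show QuotientAddGroup.mk _ = QuotientAddGroup.mk x
    rw [QuotientAddGroup.eq]
    have : -(s • hd k + t • mu k) + x = w := by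
      rw [hwdef]; abel
    rw [this]
    exact hwmem
  · rintro y ⟨pp, rfl⟩
    refine ⟨(pp.1 : ℕ) • hd k + (pp.2 : ℕ) • mu k, ?_, rfl⟩
    have : (pp.1 : ℕ) • hd k + (pp.2 : ℕ) • mu k ∈ W k (k + 2) :=
      add_mem (nsmul_mem (hd_mem k hk) _) (nsmul_mem (mu_mem k hk) _)
    exact this
end Aux

/-- For `l = k+2`: `Q ⊆ P` and the quotient `P/Q` (realised as the image of `P` in
`ℚ^{l+1}/Q`) is finite of order `2(k+2)`: the index of connectedness of the root
system `A_{k+1} × A₁`. -/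
theorem index_of_connectedness_k_plus_two (k : ℕ) (hk : 1 ≤ k) :
    (rootLattice k (k + 2) : Set (Fin (k + 2 + 1) → ℚ)) ⊆ weightLattice k (k + 2) ∧
      ((QuotientAddGroup.mk : (Fin (k + 2 + 1) → ℚ) →
          (Fin (k + 2 + 1) → ℚ) ⧸ rootLattice k (k + 2)) ''
        weightLattice k (k + 2)).ncard = 2 * (k + 2) := by
  constructor
  · exact fun x hx => Aux.rootLattice_le_W k (k + 2) hx
  · rw [Aux.image_eq k hk, ← Set.image_univ,
      Set.ncard_image_of_injective _ (Aux.gmap_injective k), Set.ncard_univ,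
      Nat.card_eq_fintype_card, Fintype.card_prod, Fintype.card_fin, Fintype.card_fin]
end

section
/- Let k ≥ 1 be an integer and set l = k+3. Let Q be the additive subgroup of ℚ^{l+1} generated by R^{k+3}_k, and let P = {x ∈ ℚ^{l+1} : B(x, ω') = 0 and B(x, m) ∈ ℤ for every m ∈ R^{k+3}_k}. Then Q ⊆ P and the quotient group P/Q is finite of order k+4 (the index of connectedness of the root system A_{k+3}). -/
/-!
The root lattice `Q` lies in `ℤ^{l+1} ∩ ω'^⊥`. Conversely, as `B(y, ω') = -k((k+1)y₀ + ∑ᵢ yᵢ)`,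
every integral `y ⊥ ω'` equals `∑ⱼ (yⱼ + y₀) fⱼ` for the roots `fⱼ = e₀ - ∑_{i ≥ 1, i ≠ j} eᵢ`
(`1 ≤ j ≤ k + 3`), so `Q = ℤ^{l+1} ∩ ω'^⊥`. On `ω'^⊥` we have `B(x, fⱼ) = -(xⱼ + 2x₀)`, so `x ⊥ ω'`
is a weight iff every `xⱼ + 2x₀` is an integer; summing over `j` gives `(k + 4)x₀ ∈ ℤ`, and a
weight lies in `Q` iff `x₀ ∈ ℤ`. Hence `P/Q` is cyclic of order `k + 4`, generated by the class of
the weight with `x₀ = 1/(k + 4)`.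
-/

open Finset

section

variable {k l : ℕ}

def bformBilin (k l : ℕ) : LinearMap.BilinForm ℚ (Fin (l + 1) → ℚ) :=
  LinearMap.mk₂ ℚ (bform k l)
    (fun _ _ _ => by simp only [bform, Pi.add_apply, add_mul, sum_add_distrib]; ring)
    (fun _ _ _ => by simp only [bform, Pi.smul_apply, smul_eq_mul, mul_sub, mul_sum]; ring_nf)
    (fun _ _ _ => by simp only [bform, Pi.add_apply, mul_add, sum_add_distrib]; ring)
    (fun _ _ _ => by simp only [bform, Pi.smul_apply, smul_eq_mul, mul_sub, mul_sum]; ring_nf)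

@[simp] lemma bformBilin_apply (v w : Fin (l + 1) → ℚ) : bformBilin k l v w = bform k l v w :=
  rfl

lemma bform_add_left (x y w : Fin (l + 1) → ℚ) :
    bform k l (x + y) w = bform k l x w + bform k l y w :=
  LinearMap.map_add₂ (bformBilin k l) x y w

lemma bform_neg_left (x w : Fin (l + 1) → ℚ) : bform k l (-x) w = -bform k l x w :=
  LinearMap.map_neg₂ (bformBilin k l) x w

lemma bform_ratOf (v w : Fin (l + 1) → ℤ) :
    bform k l (ratOf l v) (ratOf l w) = bformZ k l v w := by
  simp only [bform, bformZ, ratOf]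
  push_cast
  ring

lemma ratOf_omegaZ : ratOf l (omegaZ k l) = omegaV k l := by
  ext i
  by_cases hi : i = 0 <;> simp [ratOf, omegaZ, omegaV, hi]

lemma bform_omegaV (x : Fin (l + 1) → ℚ) :
    bform k l x (omegaV k l) = -k * ((k + 1) * x 0 + ∑ i, x i) := by
  simp only [bform, omegaV, Fin.sum_univ_succ, if_pos, Fin.succ_ne_zero, if_false, ← sum_mul]
  ring

lemma bform_omegaV_eq_zero_iff (hk : k ≠ 0) {x : Fin (l + 1) → ℚ} :
    bform k l x (omegaV k l) = 0 ↔ ∑ i, x i = -(k + 1) * x 0 := by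
  rw [bform_omegaV, mul_eq_zero, neg_eq_zero, Nat.cast_eq_zero, or_iff_right hk]
  constructor <;> intro h <;> linarith

def integralOrth (k l : ℕ) : AddSubgroup (Fin (l + 1) → ℚ) :=
  ((Int.castAddHom ℚ).compLeft (Fin (l + 1))).range ⊓
    (LinearMap.ker ((bformBilin k l).flip (omegaV k l))).toAddSubgroup

lemma mem_integralOrth {x : Fin (l + 1) → ℚ} :
    x ∈ integralOrth k l ↔ (∃ y, ratOf l y = x) ∧ bform k l x (omegaV k l) = 0 :=
  Iff.rfl

lemma rootLattice_le_integralOrth : rootLattice k l ≤ integralOrth k l := by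
  rw [rootLattice, AddSubgroup.closure_le]
  rintro _ ⟨v, hv, rfl⟩
  refine mem_integralOrth.2 ⟨⟨v, rfl⟩, ?_⟩
  rw [← ratOf_omegaZ, bform_ratOf, hv.2, Int.cast_zero]

lemma integralOrth_subset_weightLattice : (integralOrth k l : Set _) ⊆ weightLattice k l := by
  rintro _ ⟨⟨y, rfl⟩, hy⟩
  exact ⟨hy, fun m _ => ⟨bformZ k l y m, bform_ratOf y m⟩⟩

def rootF (l : ℕ) (j : Fin l) : Fin (l + 1) → ℤ :=
  Fin.cons 1 fun i => if i = j then 0 else -1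

@[simp] lemma rootF_zero (j : Fin l) : rootF l j 0 = 1 := rfl

@[simp] lemma rootF_succ (i j : Fin l) : rootF l j i.succ = if i = j then 0 else -1 := rfl

lemma bform_rootF (x : Fin (l + 1) → ℚ) (j : Fin l) :
    bform k l x (ratOf l (rootF l j)) = k * x 0 + ∑ i : Fin l, x i.succ - x j.succ := by
  simp only [bform, ratOf, Fin.sum_univ_succ (n := l), rootF_zero, rootF_succ, Int.cast_ite,
    Int.cast_zero, Int.cast_neg, Int.cast_one, mul_ite, mul_zero, mul_neg_one, mul_one, sum_ite,
    sum_const_zero, sum_neg_distrib, filter_ne', sum_erase_eq_sub, mem_univ]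
  ring

lemma sum_rootF {m : ℕ} (j : Fin (m + 1)) : ∑ i, (rootF (m + 1) j i : ℚ) = 1 - m := by
  simp only [Fin.sum_univ_succ (n := m + 1), rootF_zero, rootF_succ, Int.cast_ite, sum_ite,
    filter_ne', sum_const, card_erase_of_mem, mem_univ, card_univ, Fintype.card_fin]
  push_cast
  ring

lemma rootF_mem_rootSet (j : Fin (k + 3)) : rootF (k + 3) j ∈ rootSet k (k + 3) := by
  have h := sum_rootF j
  refine ⟨Int.cast_injective (α := ℚ) ?_, Int.cast_injective (α := ℚ) ?_⟩
  · rw [Fin.sum_univ_succ] at h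
    rw [← bform_ratOf, bform_rootF]
    simp only [ratOf, rootF_zero, rootF_succ, if_pos] at h ⊢
    push_cast at h ⊢
    linarith
  · rw [← bform_ratOf, ratOf_omegaZ, bform_omegaV]
    simp only [ratOf, rootF_zero, h]
    push_cast
    ring

lemma sum_zsmul_rootF {y : Fin (k + 3 + 1) → ℤ} (hy : ∑ i, y i = -(k + 1) * y 0) :
    ∑ j, (y j.succ + y 0) • rootF (k + 3) j = y := by
  have hcoeff : ∑ j : Fin (k + 3), (y j.succ + y 0) = y 0 := by
    rw [Fin.sum_univ_succ] at hy
    rw [sum_add_distrib, sum_const, card_univ, Fintype.card_fin, nsmul_eq_mul]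
    push_cast
    linarith
  ext t
  induction t using Fin.cases with
  | zero => simp only [Finset.sum_apply, Pi.smul_apply, smul_eq_mul, rootF_zero, mul_one, hcoeff]
  | succ s =>
    simp only [Finset.sum_apply, Pi.smul_apply, smul_eq_mul, rootF_succ, mul_ite, mul_zero,
      mul_neg_one, sum_ite, sum_const_zero, filter_ne, sum_neg_distrib, mem_univ, sum_erase_eq_sub,
      hcoeff]
    ring

lemma integralOrth_le_closure_rootF (hk : k ≠ 0) :
    integralOrth k (k + 3) ≤ AddSubgroup.closure (Set.range fun j => ratOf _ (rootF (k + 3) j)) := by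
  intro x hx
  obtain ⟨⟨y, rfl⟩, hy⟩ := mem_integralOrth.1 hx
  have hy : ∑ i, y i = -(k + 1) * y 0 := by
    have := (bform_omegaV_eq_zero_iff hk).1 hy
    simp only [ratOf] at this
    exact_mod_cast this
  change (Int.castAddHom ℚ).compLeft _ y ∈ _
  rw [← sum_zsmul_rootF hy, map_sum]
  refine AddSubgroup.sum_mem _ fun j _ => ?_
  rw [map_zsmul]
  exact zsmul_mem (AddSubgroup.subset_closure (Set.mem_range_self j)) _

lemma closure_rootF_le_rootLattice :
    AddSubgroup.closure (Set.range fun j => ratOf _ (rootF (k + 3) j)) ≤ rootLattice k (k + 3) :=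
  AddSubgroup.closure_mono <| Set.range_subset_iff.2 fun j => ⟨_, rootF_mem_rootSet j, rfl⟩

lemma rootLattice_eq_integralOrth (hk : k ≠ 0) : rootLattice k (k + 3) = integralOrth k (k + 3) :=
  rootLattice_le_integralOrth.antisymm
    ((integralOrth_le_closure_rootF hk).trans closure_rootF_le_rootLattice)

def weightLatticeAddSubgroup (k l : ℕ) : AddSubgroup (Fin (l + 1) → ℚ) where
  carrier := weightLattice k l
  zero_mem' := ⟨by simp [bform], fun _ _ => ⟨0, by simp [bform]⟩⟩
  add_mem' := by
    rintro x y ⟨hx, hxm⟩ ⟨hy, hym⟩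
    refine ⟨?_, fun m hm => ?_⟩
    · rw [bform_add_left, hx, hy, add_zero]
    · obtain ⟨a, ha⟩ := hxm m hm
      obtain ⟨b, hb⟩ := hym m hm
      exact ⟨a + b, by rw [bform_add_left, ha, hb, Int.cast_add]⟩
  neg_mem' := by
    rintro x ⟨hx, hxm⟩
    refine ⟨?_, fun m hm => ?_⟩
    · rw [bform_neg_left, hx, neg_zero]
    · obtain ⟨a, ha⟩ := hxm m hm
      exact ⟨-a, by rw [bform_neg_left, ha, Int.cast_neg]⟩

lemma bform_rootF_of_sum_eq {x : Fin (l + 1) → ℚ} (hx : ∑ i, x i = -(k + 1) * x 0)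
    (j : Fin l) : bform k l x (ratOf l (rootF l j)) = -(x j.succ + 2 * x 0) := by
  rw [Fin.sum_univ_succ] at hx
  rw [bform_rootF]
  linarith

lemma mem_weightLattice_iff (hk : k ≠ 0) {x : Fin (k + 3 + 1) → ℚ} :
    x ∈ weightLattice k (k + 3) ↔
      ∑ i, x i = -(k + 1) * x 0 ∧ ∀ j : Fin (k + 3), ∃ n : ℤ, x j.succ + 2 * x 0 = n := by
  rw [weightLattice, Set.mem_ofPred_eq, bform_omegaV_eq_zero_iff hk]
  refine and_congr_right fun hx => ⟨fun hint j => ?_, fun hint m hm => ?_⟩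
  · obtain ⟨n, hn⟩ := hint _ (rootF_mem_rootSet j)
    exact ⟨-n, by rw [Int.cast_neg, ← hn, bform_rootF_of_sum_eq hx, neg_neg]⟩
  · have hle : AddSubgroup.closure (Set.range fun j => ratOf _ (rootF (k + 3) j)) ≤
        (Int.castAddHom ℚ).range.comap (bformBilin k (k + 3) x).toAddMonoidHom := by
      rw [AddSubgroup.closure_le]
      rintro _ ⟨j, rfl⟩
      obtain ⟨n, hn⟩ := hint j
      exact ⟨-n, by simp [bform_rootF_of_sum_eq hx, hn]⟩
    have hm : ratOf _ m ∈ rootLattice k (k + 3) := AddSubgroup.subset_closure ⟨m, hm, rfl⟩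
    obtain ⟨n, hn⟩ := hle (integralOrth_le_closure_rootF hk (rootLattice_le_integralOrth hm))
    exact ⟨n, hn.symm⟩

lemma exists_add_four_mul_apply_zero_eq_intCast (hk : k ≠ 0) {x : Fin (k + 3 + 1) → ℚ}
    (hx : x ∈ weightLattice k (k + 3)) : ∃ n : ℤ, (k + 4) * x 0 = n := by
  obtain ⟨hsum, hint⟩ := (mem_weightLattice_iff hk).1 hx
  choose n hn using hint
  refine ⟨∑ j, n j, ?_⟩
  rw [Fin.sum_univ_succ] at hsum
  simp only [Int.cast_sum, ← hn, sum_add_distrib, sum_const, card_univ, Fintype.card_fin,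
    nsmul_eq_mul]
  push_cast
  linarith

lemma mem_rootLattice_iff (hk : k ≠ 0) {x : Fin (k + 3 + 1) → ℚ}
    (hx : x ∈ weightLattice k (k + 3)) : x ∈ rootLattice k (k + 3) ↔ ∃ n : ℤ, x 0 = n := by
  refine ⟨fun h => ?_, fun ⟨n, hn⟩ => ?_⟩
  · obtain ⟨⟨y, rfl⟩, -⟩ := mem_integralOrth.1 (rootLattice_le_integralOrth h)
    exact ⟨y 0, rfl⟩
  · obtain ⟨-, hint⟩ := (mem_weightLattice_iff hk).1 hx
    choose m hm using hint
    rw [rootLattice_eq_integralOrth hk]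
    refine mem_integralOrth.2 ⟨⟨Fin.cons n fun j => m j - 2 * n, ?_⟩, hx.1⟩
    ext i
    induction i using Fin.cases with
    | zero => simp [ratOf, hn]
    | succ j => simp [ratOf, ← hm, hn]

-- With `x₀ = 1/(k+4)`, the conditions `xⱼ₊₁ + 2x₀ ∈ ℤ` force `xⱼ₊₁ ≡ -2/(k+4) (mod ℤ)`;
-- the extra `1` in coordinate `1` puts the vector on `ω'^⊥`.
def weightLatticeGen (k : ℕ) : Fin (k + 3 + 1) → ℚ :=
  Fin.cons (1 / (k + 4)) fun j => (if j = 0 then 1 else 0) - 2 / (k + 4)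

lemma weightLatticeGen_mem (hk : k ≠ 0) : weightLatticeGen k ∈ weightLattice k (k + 3) := by
  refine (mem_weightLattice_iff hk).2 ⟨?_, fun j => ⟨if j = 0 then 1 else 0, ?_⟩⟩
  · simp only [weightLatticeGen, Fin.sum_univ_succ (n := k + 3), Fin.cons_zero, Fin.cons_succ,
      sum_sub_distrib, sum_ite_eq', mem_univ, if_true, sum_const, card_univ, Fintype.card_fin,
      nsmul_eq_mul]
    field_simp
    push_cast
    ring
  · simp only [weightLatticeGen, Fin.cons_zero, Fin.cons_succ, Int.cast_ite, Int.cast_one,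
      Int.cast_zero]
    split_ifs <;> ring

lemma zsmul_weightLatticeGen_mem_rootLattice_iff (hk : k ≠ 0) (n : ℤ) :
    n • weightLatticeGen k ∈ rootLattice k (k + 3) ↔ (k + 4 : ℤ) ∣ n := by
  rw [mem_rootLattice_iff hk
    ((weightLatticeAddSubgroup k (k + 3)).zsmul_mem (weightLatticeGen_mem hk) n)]
  simp only [Pi.smul_apply, weightLatticeGen, Fin.cons_zero, zsmul_eq_mul]
  constructor
  · rintro ⟨m, hm⟩
    refine ⟨m, Int.cast_injective (α := ℚ) ?_⟩
    push_cast
    field_simp at hm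
    linarith
  · rintro ⟨m, rfl⟩
    exact ⟨m, by push_cast; field_simp⟩

lemma addOrderOf_mk_weightLatticeGen (hk : k ≠ 0) :
    addOrderOf (weightLatticeGen k : (Fin (k + 3 + 1) → ℚ) ⧸ rootLattice k (k + 3)) = k + 4 := by
  have h (i : ℤ) :
      (addOrderOf (weightLatticeGen k : (Fin (k + 3 + 1) → ℚ) ⧸ rootLattice k (k + 3)) : ℤ) ∣ i ↔
        ((k + 4 : ℕ) : ℤ) ∣ i := by
    rw [addOrderOf_dvd_iff_zsmul_eq_zero, ← QuotientAddGroup.mk_zsmul,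
      QuotientAddGroup.eq_zero_iff, zsmul_weightLatticeGen_mem_rootLattice_iff hk]
    push_cast
    rfl
  exact Nat.dvd_antisymm (Int.natCast_dvd_natCast.1 ((h _).2 dvd_rfl))
    (Int.natCast_dvd_natCast.1 ((h _).1 dvd_rfl))

lemma image_mk_weightLattice (hk : k ≠ 0) :
    (QuotientAddGroup.mk : _ → (Fin (k + 3 + 1) → ℚ) ⧸ rootLattice k (k + 3)) ''
        weightLattice k (k + 3) =
      AddSubgroup.zmultiples (weightLatticeGen k : _ ⧸ rootLattice k (k + 3)) := by
  have hgen := weightLatticeGen_mem hk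
  ext q
  constructor
  · rintro ⟨x, hx, rfl⟩
    obtain ⟨a, ha⟩ := exists_add_four_mul_apply_zero_eq_intCast hk hx
    refine AddSubgroup.mem_zmultiples_iff.2 ⟨a, ?_⟩
    rw [← QuotientAddGroup.mk_zsmul, QuotientAddGroup.eq_iff_sub_mem]
    have hmem : a • weightLatticeGen k - x ∈ weightLattice k (k + 3) :=
      (weightLatticeAddSubgroup k (k + 3)).sub_mem
        ((weightLatticeAddSubgroup k (k + 3)).zsmul_mem hgen a) hx
    refine (mem_rootLattice_iff hk hmem).2 ⟨0, ?_⟩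
    rw [Pi.sub_apply, Pi.smul_apply, weightLatticeGen, Fin.cons_zero, zsmul_eq_mul, Int.cast_zero]
    field_simp
    linarith
  · rintro ⟨n, rfl⟩
    exact ⟨n • weightLatticeGen k, (weightLatticeAddSubgroup k (k + 3)).zsmul_mem hgen n,
      QuotientAddGroup.mk_zsmul _ _ _⟩

end

/-- For `l = k+3`: `Q ⊆ P` and the quotient `P/Q` (realised as the image of `P` in
`ℚ^{l+1}/Q`) is finite of order `k+4`: the index of connectedness of the root
system `A_{k+3}`. -/
theorem index_of_connectedness_k_plus_three (k : ℕ) (hk : 1 ≤ k) :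
    (rootLattice k (k + 3) : Set (Fin (k + 3 + 1) → ℚ)) ⊆ weightLattice k (k + 3) ∧
      ((QuotientAddGroup.mk : (Fin (k + 3 + 1) → ℚ) →
          (Fin (k + 3 + 1) → ℚ) ⧸ rootLattice k (k + 3)) ''
        weightLattice k (k + 3)).ncard = k + 4 := by
  have hk : k ≠ 0 := Nat.one_le_iff_ne_zero.1 hk
  refine ⟨subset_trans rootLattice_le_integralOrth integralOrth_subset_weightLattice, ?_⟩
  rw [image_mk_weightLattice hk, ← Nat.card_coe_set_eq, SetLike.coe_sort_coe,
    Nat.card_zmultiples, addOrderOf_mk_weightLatticeGen hk]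
end

section
/- Let k ≥ 1 be an integer and set l = k+4. Let Q be the additive subgroup of ℚ^{l+1} generated by R^{k+4}_k, and let P = {x ∈ ℚ^{l+1} : B(x, ω') = 0 and B(x, m) ∈ ℤ for every m ∈ R^{k+4}_k}. Then Q ⊆ P and the quotient group P/Q is finite of order 4 (the index of connectedness of the root system D_{k+4}). -/
namespace IdxAux

variable {k : ℕ}

lemma one_ne_zero' : (1 : Fin (k + 4 + 1)) ≠ 0 := by
  simp [Fin.ext_iff]

lemma last_ne_zero : (Fin.last (k+4)) ≠ (0 : Fin (k + 4 + 1)) := by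
  simp [Fin.ext_iff]

lemma last_ne_one : (Fin.last (k+4)) ≠ (1 : Fin (k + 4 + 1)) := by
  simp [Fin.ext_iff]

lemma bformZ_omega (v : Fin (k + 4 + 1) → ℤ) :
    bformZ k (k+4) v (omegaZ k (k+4)) = -(k:ℤ) * (((k:ℤ)+1) * v 0 + ∑ i, v i) := by
  have h : ∀ i : Fin (k+4+1), v i * omegaZ k (k+4) i
      = (k:ℤ) * v i + (if i = 0 then (-(2*(k:ℤ)+2)) * v i else 0) := by
    intro i
    by_cases hi : i = 0 <;> simp [omegaZ, hi] <;> ring_nf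
  have h0 : omegaZ k (k+4) 0 = -((k:ℤ)+2) := by simp [omegaZ]
  rw [bformZ, Finset.sum_congr rfl (fun i _ => h i), Finset.sum_add_distrib,
    Finset.sum_ite_eq' Finset.univ (0 : Fin (k+4+1)), ← Finset.mul_sum, h0]
  simp only [Finset.mem_univ, if_true]
  ring

lemma bform_omega (v : Fin (k + 4 + 1) → ℚ) :
    bform k (k+4) v (omegaV k (k+4)) = -(k:ℚ) * (((k:ℚ)+1) * v 0 + ∑ i, v i) := by
  have h : ∀ i : Fin (k+4+1), v i * omegaV k (k+4) i
      = (k:ℚ) * v i + (if i = 0 then (-(2*(k:ℚ)+2)) * v i else 0) := by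
    intro i
    by_cases hi : i = 0 <;> simp [omegaV, hi] <;> ring_nf
  have h0 : omegaV k (k+4) 0 = -((k:ℚ)+2) := by simp [omegaV]
  rw [bform, Finset.sum_congr rfl (fun i _ => h i), Finset.sum_add_distrib,
    Finset.sum_ite_eq' Finset.univ (0 : Fin (k+4+1)), ← Finset.mul_sum, h0]
  simp only [Finset.mem_univ, if_true]
  ring

/-- The subgroup of integral vectors orthogonal to ω'. -/
def qgroup (k : ℕ) : AddSubgroup (Fin (k + 4 + 1) → ℚ) where
  carrier := {x | (∀ i, ∃ n : ℤ, x i = (n : ℚ)) ∧ ((k:ℚ)+1) * x 0 + ∑ i, x i = 0}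
  zero_mem' := by
    refine ⟨fun i => ⟨0, by simp⟩, by simp⟩
  add_mem' := by
    rintro x y ⟨hx1, hx2⟩ ⟨hy1, hy2⟩
    refine ⟨fun i => ?_, ?_⟩
    · obtain ⟨a, ha⟩ := hx1 i; obtain ⟨b, hb⟩ := hy1 i
      exact ⟨a + b, by simp [Pi.add_apply, ha, hb]⟩
    · simp only [Pi.add_apply, Finset.sum_add_distrib]
      linarith
  neg_mem' := by
    rintro x ⟨hx1, hx2⟩
    refine ⟨fun i => ?_, ?_⟩
    · obtain ⟨a, ha⟩ := hx1 i
      exact ⟨-a, by simp [Pi.neg_apply, ha]⟩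
    · simp only [Pi.neg_apply, Finset.sum_neg_distrib]
      linarith

/-- The special root with nonzero 0-coordinate. -/
def uZ (k : ℕ) : Fin (k + 4 + 1) → ℤ := fun i =>
  if i = 0 then 1 else if i = 1 then 0 else if i = Fin.last (k+4) then 0 else -1

/-- The root `e_j - e_1`. -/
def dl (k : ℕ) (j : Fin (k + 4 + 1)) : Fin (k + 4 + 1) → ℤ := fun i =>
  (if i = j then 1 else 0) - (if i = (1 : Fin (k + 4 + 1)) then 1 else 0)

lemma uZ_apply_zero : uZ k 0 = 1 := by simp [uZ]

lemma uZ_eq (i : Fin (k + 4 + 1)) :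
    uZ k i = -1 + (if i = 0 then 2 else 0) + (if i = 1 then 1 else 0)
      + (if i = Fin.last (k+4) then 1 else 0) := by
  unfold uZ
  by_cases h0 : i = 0
  · subst h0; simp [one_ne_zero'.symm, last_ne_zero.symm]
  by_cases h1 : i = 1
  · subst h1; simp [h0, last_ne_one.symm]
  by_cases hl : i = Fin.last (k+4)
  · subst hl; simp [h0, h1]
  · simp [h0, h1, hl]

lemma sum_uZ : ∑ i, uZ k i = -((k:ℤ)+1) := by
  rw [Finset.sum_congr rfl (fun i _ => uZ_eq i)]
  simp only [Finset.sum_add_distrib, Finset.sum_const, Finset.card_univ, Fintype.card_fin,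
    Finset.sum_ite_eq' Finset.univ, Finset.mem_univ, if_true]
  push_cast
  ring

lemma sum_sq_uZ : ∑ i, uZ k i * uZ k i = (k:ℤ)+3 := by
  have h : ∀ i : Fin (k+4+1), uZ k i * uZ k i
      = 1 + (if i = 1 then -1 else 0) + (if i = Fin.last (k+4) then -1 else 0) := by
    intro i
    unfold uZ
    by_cases h0 : i = 0
    · subst h0; simp [one_ne_zero'.symm, last_ne_zero.symm]
    by_cases h1 : i = 1
    · subst h1; simp [h0, last_ne_one.symm]
    by_cases hl : i = Fin.last (k+4)
    · subst hl; simp [h0, h1]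
    · simp [h0, h1, hl]
  rw [Finset.sum_congr rfl (fun i _ => h i)]
  simp only [Finset.sum_add_distrib, Finset.sum_const, Finset.card_univ, Fintype.card_fin,
    Finset.sum_ite_eq' Finset.univ, Finset.mem_univ, if_true]
  push_cast
  ring

lemma uZ_root : uZ k ∈ rootSet k (k+4) := by
  constructor
  · rw [bformZ, sum_sq_uZ, uZ_apply_zero]
    ring
  · rw [bformZ_omega, sum_uZ, uZ_apply_zero]
    ring

lemma dl_apply_zero (hj : j ≠ 0) : dl k j 0 = 0 := by
  simp [dl, Ne.symm hj, one_ne_zero'.symm]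

lemma sum_dl (j : Fin (k + 4 + 1)) : ∑ i, dl k j i = 0 := by
  unfold dl
  simp [Finset.sum_sub_distrib, Finset.sum_ite_eq' Finset.univ]

lemma sum_sq_dl (j : Fin (k + 4 + 1)) (hj1 : j ≠ 1) :
    ∑ i, dl k j i * dl k j i = 2 := by
  have h : ∀ i : Fin (k+4+1), dl k j i * dl k j i
      = (if i = j then 1 else 0) + (if i = 1 then 1 else 0) := by
    intro i
    unfold dl
    by_cases ha : i = j
    · subst ha; simp [hj1]
    by_cases hb : i = 1
    · subst hb; simp [ha]
    · simp [ha, hb]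
  rw [Finset.sum_congr rfl (fun i _ => h i)]
  simp [Finset.sum_add_distrib, Finset.sum_ite_eq' Finset.univ]

lemma dl_root (j : Fin (k + 4 + 1)) (hj0 : j ≠ 0) (hj1 : j ≠ 1) :
    dl k j ∈ rootSet k (k+4) := by
  constructor
  · rw [bformZ, sum_sq_dl j hj1, dl_apply_zero hj0]
    ring
  · rw [bformZ_omega, sum_dl, dl_apply_zero hj0]
    ring

lemma root_rel (hk : 1 ≤ k) {m : Fin (k + 4 + 1) → ℤ} (hm : m ∈ rootSet k (k+4)) :
    ((k:ℤ)+1) * m 0 + ∑ i, m i = 0 := by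
  have h := hm.2
  rw [bformZ_omega] at h
  have hk' : (k:ℤ) ≠ 0 := Int.natCast_ne_zero.mpr (by omega)
  rcases mul_eq_zero.mp h with h' | h'
  · exact absurd h' (by simpa using hk')
  · exact h'

lemma rootLattice_le_qgroup (hk : 1 ≤ k) : rootLattice k (k+4) ≤ qgroup k := by
  rw [rootLattice, AddSubgroup.closure_le]
  rintro x ⟨m, hm, rfl⟩
  refine ⟨fun i => ⟨m i, rfl⟩, ?_⟩
  have h := root_rel hk hm
  have : (((((k:ℤ)+1) * m 0 + ∑ i, m i : ℤ)) : ℚ) = 0 := by exact_mod_cast h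
  push_cast at this
  simpa [ratOf] using this

lemma qgroup_le_rootLattice (hk : 1 ≤ k) : qgroup k ≤ rootLattice k (k+4) := by
  rintro x ⟨hint, hrel⟩
  choose v hv using hint
  have hxv : x = ratOf (k+4) v := funext fun i => hv i
  have hrelZ : ((k:ℤ)+1) * v 0 + ∑ i, v i = 0 := by
    have : (((((k:ℤ)+1) * v 0 + ∑ i, v i : ℤ)) : ℚ) = 0 := by
      push_cast
      rw [Finset.sum_congr rfl (fun i _ => (hv i).symm)]
      rw [← hv 0]
      exact hrel
    exact_mod_cast this
  set c : Fin (k+4+1) → ℤ := fun j => v j - v 0 * uZ k j with hc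
  have hc0 : c 0 = 0 := by simp [hc, uZ_apply_zero]
  have hsumc : ∑ j, c j = 0 := by
    simp only [hc, Finset.sum_sub_distrib, ← Finset.mul_sum, sum_uZ]
    rw [show (∑ j, v j) = -((k:ℤ)+1) * v 0 by linarith]
    ring
  have hdecomp : x = (v 0) • ratOf (k+4) (uZ k) + ∑ j, (c j) • ratOf (k+4) (dl k j) := by
    funext m
    have hsum : (∑ j, (c j) • ratOf (k+4) (dl k j)) m
        = ∑ j, (c j : ℚ) * ((if m = j then 1 else 0) - (if m = 1 then 1 else 0)) := by
      rw [Finset.sum_apply]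
      refine Finset.sum_congr rfl fun j _ => ?_
      simp [ratOf, dl, zsmul_eq_mul]
    have h2 : (∑ j, (c j : ℚ) * ((if m = j then 1 else 0) - (if m = 1 then 1 else 0)))
        = (c m : ℚ) - (if m = 1 then ((∑ j, c j : ℤ) : ℚ) else 0) := by
      simp only [mul_sub]
      rw [Finset.sum_sub_distrib]
      congr 1
      · rw [Finset.sum_congr rfl (fun j _ => by rw [mul_ite, mul_one, mul_zero]),
          Finset.sum_ite_eq Finset.univ m]
        simp
      · by_cases hm1 : m = 1 <;> simp [hm1]
    rw [Pi.add_apply, hsum, h2, hsumc]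
    simp only [Pi.smul_apply, ratOf, zsmul_eq_mul, hv m]
    have : v m = v 0 * uZ k m + c m := by simp [hc]
    rw [this]
    push_cast
    try simp
    try ring
  rw [hdecomp]
  refine AddSubgroup.add_mem _ ?_ (AddSubgroup.sum_mem _ fun j _ => ?_)
  · exact AddSubgroup.zsmul_mem _ (AddSubgroup.subset_closure (Set.mem_image_of_mem _ uZ_root)) _
  · by_cases hj0 : j = 0
    · subst hj0; rw [hc0, zero_smul]; exact zero_mem _
    by_cases hj1 : j = 1
    · subst hj1
      have : ratOf (k+4) (dl k 1) = 0 := by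
        funext i; simp [ratOf, dl]
      rw [this, smul_zero]; exact zero_mem _
    · exact AddSubgroup.zsmul_mem _
        (AddSubgroup.subset_closure (Set.mem_image_of_mem _ (dl_root j hj0 hj1))) _

lemma rootLattice_eq_qgroup (hk : 1 ≤ k) : rootLattice k (k+4) = qgroup k :=
  le_antisymm (rootLattice_le_qgroup hk) (qgroup_le_rootLattice hk)

/-- Representative vectors: first coordinate `a`, all middle coordinates `c`,
last coordinate adjusted so that the vector is orthogonal to ω'. -/
def wv (k : ℕ) (a c : ℚ) : Fin (k + 4 + 1) → ℚ := fun i =>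
  if i = 0 then a else if i = Fin.last (k+4) then -((k:ℚ)+2)*a - ((k:ℚ)+3)*c else c

lemma wv_eq (a c : ℚ) (i : Fin (k + 4 + 1)) :
    wv k a c i = c + (if i = 0 then a - c else 0)
      + (if i = Fin.last (k+4) then -((k:ℚ)+2)*a - ((k:ℚ)+4)*c else 0) := by
  unfold wv
  by_cases h0 : i = 0
  · subst h0; simp [last_ne_zero.symm]
  by_cases hl : i = Fin.last (k+4)
  · subst hl; simp [h0]; ring
  · simp [h0, hl]

lemma wv_apply_zero (a c : ℚ) : wv k a c 0 = a := by simp [wv]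

lemma wv_apply_one (a c : ℚ) : wv k a c 1 = c := by
  simp [wv, one_ne_zero', Ne.symm last_ne_one]

lemma sum_wv (a c : ℚ) : ∑ i, wv k a c i = -((k:ℚ)+1)*a := by
  rw [Finset.sum_congr rfl (fun i _ => wv_eq a c i)]
  simp only [Finset.sum_add_distrib, Finset.sum_const, Finset.card_univ, Fintype.card_fin,
    Finset.sum_ite_eq' Finset.univ, Finset.mem_univ, if_true]
  push_cast
  ring

lemma wv_rel (a c : ℚ) : ((k:ℚ)+1) * wv k a c 0 + ∑ i, wv k a c i = 0 := by
  rw [sum_wv, wv_apply_zero]; ring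

lemma sum_mul_wv (a c : ℚ) (m : Fin (k + 4 + 1) → ℚ) :
    ∑ i, wv k a c i * m i = c * (∑ i, m i) + (a - c) * m 0
      + (-((k:ℚ)+2)*a - ((k:ℚ)+4)*c) * m (Fin.last (k+4)) := by
  have h : ∀ i : Fin (k+4+1), wv k a c i * m i
      = c * m i + (if i = 0 then (a - c) * m i else 0)
        + (if i = Fin.last (k+4) then (-((k:ℚ)+2)*a - ((k:ℚ)+4)*c) * m i else 0) := by
    intro i
    rw [wv_eq]
    by_cases h0 : i = 0 <;> by_cases hl : i = Fin.last (k+4) <;>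
      simp [h0, hl] <;> ring
  rw [Finset.sum_congr rfl (fun i _ => h i)]
  simp only [Finset.sum_add_distrib, ← Finset.mul_sum,
    Finset.sum_ite_eq' Finset.univ, Finset.mem_univ, if_true]

lemma wv_mem_weight (hk : 1 ≤ k) (a c : ℚ)
    (h1 : ∃ n : ℤ, (k:ℚ)*a + ((k:ℚ)+2)*c = (n:ℚ))
    (h2 : ∃ n : ℤ, -((k:ℚ)+2)*a - ((k:ℚ)+4)*c = (n:ℚ)) :
    wv k a c ∈ weightLattice k (k+4) := by
  obtain ⟨n1, hn1⟩ := h1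
  obtain ⟨n2, hn2⟩ := h2
  constructor
  · rw [bform_omega, wv_rel]; ring
  · intro m hm
    have hrel := root_rel hk hm
    have hrelQ : ((k:ℚ)+1) * (m 0 : ℚ) + ∑ i, (m i : ℚ) = 0 := by
      have : (((((k:ℤ)+1) * m 0 + ∑ i, m i : ℤ)) : ℚ) = 0 := by exact_mod_cast hrel
      push_cast at this
      convert this using 2
    refine ⟨m 0 * n1 - m (Fin.last (k+4)) * n2, ?_⟩
    rw [bform, sum_mul_wv a c (ratOf (k+4) m), wv_apply_zero]
    simp only [ratOf]
    push_cast
    have hsub : (∑ i, (m i : ℚ)) = -((k:ℚ)+1) * (m 0 : ℚ) := by linarith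
    rw [hsub]
    linear_combination ((m 0 : ℚ)) * hn1 - ((m (Fin.last (k+4)) : ℚ)) * hn2

lemma weight_diff (hk : 1 ≤ k) {x : Fin (k + 4 + 1) → ℚ}
    (hx : x ∈ weightLattice k (k+4)) (i : Fin (k + 4 + 1)) (hi : i ≠ 0) :
    ∃ n : ℤ, x 1 - x i = (n:ℚ) := by
  by_cases hi1 : i = 1
  · exact ⟨0, by simp [hi1]⟩
  obtain ⟨n, hn⟩ := hx.2 (dl k i) (dl_root i hi hi1)
  refine ⟨n, ?_⟩
  rw [bform] at hn
  have hz : (ratOf (k+4) (dl k i)) 0 = 0 := by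
    simp [ratOf, dl_apply_zero hi]
  have hsum : ∑ j, x j * (ratOf (k+4) (dl k i)) j = x i - x 1 := by
    have h : ∀ j : Fin (k+4+1), x j * (ratOf (k+4) (dl k i)) j
        = (if j = i then x j else 0) - (if j = 1 then x j else 0) := by
      intro j
      by_cases ha : j = i
      · subst ha
        simp [ratOf, dl, hi1]
      by_cases hb : j = 1
      · subst hb
        simp [ratOf, dl, ha]
      · simp [ratOf, dl, ha, hb]
    rw [Finset.sum_congr rfl (fun j _ => h j), Finset.sum_sub_distrib]
    simp [Finset.sum_ite_eq' Finset.univ]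
  rw [hz, hsum] at hn
  rw [← hn]
  ring

lemma wv_apply_last (a c : ℚ) :
    wv k a c (Fin.last (k+4)) = -((k:ℚ)+2)*a - ((k:ℚ)+3)*c := by
  simp [wv, last_ne_zero]

lemma wv_apply_other (a c : ℚ) (i : Fin (k + 4 + 1)) (h0 : i ≠ 0)
    (hl : i ≠ Fin.last (k+4)) : wv k a c i = c := by
  simp [wv, h0, hl]

lemma weight_rel (hk : 1 ≤ k) {x : Fin (k + 4 + 1) → ℚ}
    (hx : x ∈ weightLattice k (k+4)) : ((k:ℚ)+1) * x 0 + ∑ i, x i = 0 := by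
  have h := hx.1
  rw [bform_omega] at h
  have hk' : (k:ℚ) ≠ 0 := Nat.cast_ne_zero.mpr (by omega)
  rcases mul_eq_zero.mp h with h' | h'
  · exact absurd h' (by simpa using hk')
  · exact h'

lemma sum_mul_uZ (x : Fin (k + 4 + 1) → ℚ) :
    ∑ i, x i * (uZ k i : ℚ)
      = -(∑ i, x i) + 2*x 0 + x 1 + x (Fin.last (k+4)) := by
  have h : ∀ i : Fin (k+4+1), x i * (uZ k i : ℚ)
      = -(x i) + (if i = 0 then 2 * x i else 0) + (if i = 1 then x i else 0)
        + (if i = Fin.last (k+4) then x i else 0) := by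
    intro i
    rw [uZ_eq]
    push_cast
    by_cases h0 : i = 0 <;> by_cases h1 : i = 1 <;>
      by_cases hl : i = Fin.last (k+4) <;> simp [h0, h1, hl] <;> ring
  rw [Finset.sum_congr rfl (fun i _ => h i)]
  simp only [Finset.sum_add_distrib, Finset.sum_neg_distrib,
    Finset.sum_ite_eq' Finset.univ, Finset.mem_univ, if_true]

/-- The key arithmetic facts about an element of the weight lattice. -/
lemma weight_facts (hk : 1 ≤ k) {x : Fin (k + 4 + 1) → ℚ}
    (hx : x ∈ weightLattice k (k+4)) :
    ∃ m n α : ℤ, 2*x 0 + 2*x 1 = (m:ℚ) ∧ 4*x 1 = (n:ℚ)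
      ∧ (k:ℚ)*x 0 + ((k:ℚ)+2)*x 1 = (α:ℚ) ∧ 2*(α:ℚ) = (k:ℚ)*(m:ℚ) + (n:ℚ) := by
  have hrel := weight_rel hk hx
  have hD : ∀ i : Fin (k+4+1), ∃ nn : ℤ, i ≠ 0 → x 1 - x i = (nn:ℚ) := by
    intro i
    by_cases h : i = 0
    · exact ⟨0, fun h' => absurd h h'⟩
    · obtain ⟨nn, hnn⟩ := weight_diff hk hx i h
      exact ⟨nn, fun _ => hnn⟩
  choose D hD using hD
  set NDsum : ℤ := ∑ i, (if i = 0 then 0 else D i) with hNDsum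
  have hsumx : ∑ i, x i = x 0 + ((k:ℚ)+4) * x 1 - (NDsum : ℚ) := by
    have h : ∀ i : Fin (k+4+1), x i
        = (if i = 0 then x 0 - x 1 else 0) + x 1 - (if i = 0 then 0 else (D i : ℚ)) := by
      intro i
      by_cases h0 : i = 0
      · simp [h0]
      · have := hD i h0
        simp [h0]
        linarith
    rw [Finset.sum_congr rfl (fun i _ => h i)]
    have hcast : ((NDsum : ℤ) : ℚ) = ∑ i, (if i = (0 : Fin (k+4+1)) then 0 else (D i : ℚ)) := by
      rw [hNDsum]
      push_cast [apply_ite (fun z : ℤ => (z : ℚ))]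
      ring
    rw [Finset.sum_sub_distrib, Finset.sum_add_distrib, ← hcast]
    simp only [Finset.sum_ite_eq' Finset.univ, Finset.mem_univ, if_true,
      Finset.sum_const, Finset.card_univ, Fintype.card_fin]
    push_cast
    ring
  have hDsum : ((k:ℚ)+2)*x 0 + ((k:ℚ)+4)*x 1 = (NDsum:ℚ) := by linarith
  obtain ⟨Nu, hNu⟩ := hx.2 (uZ k) uZ_root
  have hbu : bform k (k+4) x (ratOf (k+4) (uZ k))
      = -2*x 0 - 2*x 1 + (D (Fin.last (k+4)) : ℚ) := by
    rw [bform]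
    have h1 : (ratOf (k+4) (uZ k)) 0 = 1 := by simp [ratOf, uZ_apply_zero]
    have h2 : ∑ i, x i * (ratOf (k+4) (uZ k)) i
        = -(∑ i, x i) + 2*x 0 + x 1 + x (Fin.last (k+4)) := sum_mul_uZ x
    rw [h1, h2]
    have h3 := hD (Fin.last (k+4)) last_ne_zero
    linarith
  rw [hbu] at hNu
  set DNu : ℤ := D (Fin.last (k+4)) - Nu with hDNu
  have hDNuQ : (DNu : ℚ) = (D (Fin.last (k+4)) : ℚ) - (Nu : ℚ) := by
    rw [hDNu]; push_cast; ring
  refine ⟨DNu, 2*NDsum - ((k:ℤ)+2)*DNu, NDsum - DNu, ?_, ?_, ?_, ?_⟩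
  · push_cast
    linarith
  · push_cast
    linear_combination 2*hDsum - ((k:ℚ)+2) * (by rw [hDNuQ]; linarith :
      2*x 0 + 2*x 1 = ((DNu : ℤ) : ℚ))
  · push_cast
    linarith
  · push_cast
    ring

/-- If `x` is a weight and agrees with `wv k a c` modulo ℤ in coordinates 0 and 1,
then `x - wv k a c` lies in the root lattice. -/
lemma sub_wv_mem (hk : 1 ≤ k) {x : Fin (k + 4 + 1) → ℚ}
    (hx : x ∈ weightLattice k (k+4)) (a c : ℚ)
    (h0 : ∃ n : ℤ, x 0 - a = (n:ℚ)) (h1 : ∃ n : ℤ, x 1 - c = (n:ℚ))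
    (hd : ∃ n : ℤ, -((k:ℚ)+2)*a - ((k:ℚ)+4)*c = (n:ℚ)) :
    x - wv k a c ∈ qgroup k := by
  obtain ⟨n0, hn0⟩ := h0
  obtain ⟨n1, hn1⟩ := h1
  obtain ⟨nd, hnd⟩ := hd
  constructor
  · intro i
    by_cases hi0 : i = 0
    · subst hi0
      exact ⟨n0, by rw [Pi.sub_apply, wv_apply_zero]; exact hn0⟩
    obtain ⟨ndiff, hndiff⟩ := weight_diff hk hx i hi0
    by_cases hil : i = Fin.last (k+4)
    · refine ⟨n1 - ndiff - nd, ?_⟩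
      subst hil
      rw [Pi.sub_apply, wv_apply_last]
      push_cast
      linarith
    · refine ⟨n1 - ndiff, ?_⟩
      rw [Pi.sub_apply, wv_apply_other a c i hi0 hil]
      push_cast
      linarith
  · have hxrel := weight_rel hk hx
    have hwrel := wv_rel (k := k) a c
    simp only [Pi.sub_apply, Finset.sum_sub_distrib]
    linarith

lemma mk_eq_iff (hk : 1 ≤ k) (a b : Fin (k + 4 + 1) → ℚ) :
    (QuotientAddGroup.mk a : (Fin (k + 4 + 1) → ℚ) ⧸ rootLattice k (k+4))
      = QuotientAddGroup.mk b ↔ a - b ∈ qgroup k := by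
  rw [QuotientAddGroup.eq, rootLattice_eq_qgroup hk,
    show -a + b = -(a - b) by abel, neg_mem_iff]

lemma final_count (hk : 1 ≤ k) (w0 w1 w2 w3 : Fin (k + 4 + 1) → ℚ)
    (hA0 : w0 ∈ weightLattice k (k+4)) (hA1 : w1 ∈ weightLattice k (k+4))
    (hA2 : w2 ∈ weightLattice k (k+4)) (hA3 : w3 ∈ weightLattice k (k+4))
    (hB : ∀ x ∈ weightLattice k (k+4), x - w0 ∈ qgroup k ∨ x - w1 ∈ qgroup k
      ∨ x - w2 ∈ qgroup k ∨ x - w3 ∈ qgroup k)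
    (hC01 : w0 - w1 ∉ qgroup k) (hC02 : w0 - w2 ∉ qgroup k) (hC03 : w0 - w3 ∉ qgroup k)
    (hC12 : w1 - w2 ∉ qgroup k) (hC13 : w1 - w3 ∉ qgroup k) (hC23 : w2 - w3 ∉ qgroup k) :
    ((QuotientAddGroup.mk : (Fin (k + 4 + 1) → ℚ) →
        (Fin (k + 4 + 1) → ℚ) ⧸ rootLattice k (k + 4)) ''
      weightLattice k (k + 4)).ncard = 4 := by
  have himg : (QuotientAddGroup.mk : (Fin (k + 4 + 1) → ℚ) →
        (Fin (k + 4 + 1) → ℚ) ⧸ rootLattice k (k + 4)) '' weightLattice k (k + 4)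
      = {QuotientAddGroup.mk w0, QuotientAddGroup.mk w1,
          QuotientAddGroup.mk w2, QuotientAddGroup.mk w3} := by
    apply Set.eq_of_subset_of_subset
    · rintro q ⟨x, hx, rfl⟩
      rcases hB x hx with h | h | h | h
      · exact Or.inl ((mk_eq_iff hk x w0).mpr h)
      · exact Or.inr (Or.inl ((mk_eq_iff hk x w1).mpr h))
      · exact Or.inr (Or.inr (Or.inl ((mk_eq_iff hk x w2).mpr h)))
      · exact Or.inr (Or.inr (Or.inr ((mk_eq_iff hk x w3).mpr h)))
    · rintro q (rfl | rfl | rfl | rfl)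
      · exact ⟨w0, hA0, rfl⟩
      · exact ⟨w1, hA1, rfl⟩
      · exact ⟨w2, hA2, rfl⟩
      · exact ⟨w3, hA3, rfl⟩
  have d01 : (QuotientAddGroup.mk w0 : (Fin (k + 4 + 1) → ℚ) ⧸ rootLattice k (k+4))
      ≠ QuotientAddGroup.mk w1 := fun h => hC01 ((mk_eq_iff hk _ _).mp h)
  have d02 : (QuotientAddGroup.mk w0 : (Fin (k + 4 + 1) → ℚ) ⧸ rootLattice k (k+4))
      ≠ QuotientAddGroup.mk w2 := fun h => hC02 ((mk_eq_iff hk _ _).mp h)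
  have d03 : (QuotientAddGroup.mk w0 : (Fin (k + 4 + 1) → ℚ) ⧸ rootLattice k (k+4))
      ≠ QuotientAddGroup.mk w3 := fun h => hC03 ((mk_eq_iff hk _ _).mp h)
  have d12 : (QuotientAddGroup.mk w1 : (Fin (k + 4 + 1) → ℚ) ⧸ rootLattice k (k+4))
      ≠ QuotientAddGroup.mk w2 := fun h => hC12 ((mk_eq_iff hk _ _).mp h)
  have d13 : (QuotientAddGroup.mk w1 : (Fin (k + 4 + 1) → ℚ) ⧸ rootLattice k (k+4))
      ≠ QuotientAddGroup.mk w3 := fun h => hC13 ((mk_eq_iff hk _ _).mp h)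
  have d23 : (QuotientAddGroup.mk w2 : (Fin (k + 4 + 1) → ℚ) ⧸ rootLattice k (k+4))
      ≠ QuotientAddGroup.mk w3 := fun h => hC23 ((mk_eq_iff hk _ _).mp h)
  rw [himg]
  rw [Set.ncard_insert_of_notMem (by
      simp only [Set.mem_insert_iff, Set.mem_singleton_iff]
      push_neg
      exact ⟨d01, d02, d03⟩)
    (((Set.finite_singleton _).insert _).insert _)]
  rw [Set.ncard_insert_of_notMem (by
      simp only [Set.mem_insert_iff, Set.mem_singleton_iff]
      push_neg
      exact ⟨d12, d13⟩)
    ((Set.finite_singleton _).insert _)]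
  rw [Set.ncard_insert_of_notMem (by
      simp only [Set.mem_singleton_iff]
      exact d23)
    (Set.finite_singleton _)]
  rw [Set.ncard_singleton]

lemma wv_diff_coords {a c a' c' : ℚ} (h : wv k a c - wv k a' c' ∈ qgroup k) :
    (∃ N : ℤ, a - a' = (N:ℚ)) ∧ (∃ N : ℤ, c - c' = (N:ℚ)) := by
  obtain ⟨hint, _⟩ := h
  constructor
  · obtain ⟨N, hN⟩ := hint 0
    exact ⟨N, by rw [Pi.sub_apply, wv_apply_zero, wv_apply_zero] at hN; exact hN⟩
  · obtain ⟨N, hN⟩ := hint 1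
    exact ⟨N, by rw [Pi.sub_apply, wv_apply_one, wv_apply_one] at hN; exact hN⟩

lemma not_int_half_diff {q : ℚ} (h : 2*q = 1 ∨ 2*q = -1) : ¬ ∃ n : ℤ, q = (n:ℚ) := by
  rintro ⟨n, rfl⟩
  rcases h with h | h
  · have : 2*n = 1 := by exact_mod_cast h
    omega
  · have : 2*n = -1 := by exact_mod_cast h
    omega

lemma not_int_quarter {ri rj : ℤ} (h0 : 0 ≤ ri) (h1 : ri < rj) (h2 : rj < 4) :
    ¬ ∃ n : ℤ, ((ri:ℚ))/4 - ((rj:ℚ))/4 = (n:ℚ) := by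
  rintro ⟨n, hn⟩
  have : (ri:ℚ) - rj = 4*n := by linarith
  have : ri - rj = 4*n := by exact_mod_cast this
  omega

lemma count_odd (hk : 1 ≤ k) (t : ℕ) (hko : k = 2*t + 1) :
    ((QuotientAddGroup.mk : (Fin (k + 4 + 1) → ℚ) →
        (Fin (k + 4 + 1) → ℚ) ⧸ rootLattice k (k + 4)) ''
      weightLattice k (k + 4)).ncard = 4 := by
  have hkQ : (k:ℚ) = 2*(t:ℚ) + 1 := by rw [hko]; push_cast; ring
  have hAgen : ∀ r : ℤ, wv k ((r:ℚ)/4) ((r:ℚ)/4) ∈ weightLattice k (k+4) := by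
    intro r
    apply wv_mem_weight hk
    · exact ⟨((t:ℤ)+1)*r, by push_cast; linear_combination ((r:ℚ)/2)*hkQ⟩
    · exact ⟨-(((t:ℤ)+2))*r, by push_cast; linear_combination (-(r:ℚ)/2)*hkQ⟩
  have hCgen : ∀ ri rj : ℤ, 0 ≤ ri → ri < rj → rj < 4 →
      wv k ((ri:ℚ)/4) ((ri:ℚ)/4) - wv k ((rj:ℚ)/4) ((rj:ℚ)/4) ∉ qgroup k := by
    intro ri rj h0 h1 h2 hmem
    exact not_int_quarter h0 h1 h2 (wv_diff_coords hmem).1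
  apply final_count hk
    (wv k (((0:ℤ):ℚ)/4) (((0:ℤ):ℚ)/4)) (wv k (((1:ℤ):ℚ)/4) (((1:ℤ):ℚ)/4))
    (wv k (((2:ℤ):ℚ)/4) (((2:ℤ):ℚ)/4)) (wv k (((3:ℤ):ℚ)/4) (((3:ℤ):ℚ)/4))
    (hAgen 0) (hAgen 1) (hAgen 2) (hAgen 3)
    ?_
    (hCgen 0 1 (by norm_num) (by norm_num) (by norm_num))
    (hCgen 0 2 (by norm_num) (by norm_num) (by norm_num))
    (hCgen 0 3 (by norm_num) (by norm_num) (by norm_num))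
    (hCgen 1 2 (by norm_num) (by norm_num) (by norm_num))
    (hCgen 1 3 (by norm_num) (by norm_num) (by norm_num))
    (hCgen 2 3 (by norm_num) (by norm_num) (by norm_num))
  intro x hx
  obtain ⟨m, n, α, hm, hn, hα, h2α⟩ := weight_facts hk hx
  have main : ∀ r : ℤ, n % 4 = r → x - wv k ((r:ℚ)/4) ((r:ℚ)/4) ∈ qgroup k := by
    intro r hr
    have hn4 : (n:ℚ) = 4*((n/4 : ℤ):ℚ) + (r:ℚ) := by
      exact_mod_cast (by omega : n = 4*(n/4) + r)
    apply sub_wv_mem hk hx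
    · refine ⟨((t:ℤ)+1)*m - α + n/4, ?_⟩
      push_cast
      linear_combination (1/2)*hm - (1/4)*hn + (1/2)*h2α + ((m:ℚ)/2)*hkQ + (1/4)*hn4
    · refine ⟨n/4, ?_⟩
      linarith
    · exact ⟨-(((t:ℤ)+2))*r, by push_cast; linear_combination (-(r:ℚ)/2)*hkQ⟩
  rcases (by omega : n % 4 = 0 ∨ n % 4 = 1 ∨ n % 4 = 2 ∨ n % 4 = 3) with h | h | h | h
  · exact Or.inl (main 0 h)
  · exact Or.inr (Or.inl (main 1 h))
  · exact Or.inr (Or.inr (Or.inl (main 2 h)))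
  · exact Or.inr (Or.inr (Or.inr (main 3 h)))

lemma count_even (hk : 1 ≤ k) (t : ℕ) (hke : k = 2*t) :
    ((QuotientAddGroup.mk : (Fin (k + 4 + 1) → ℚ) →
        (Fin (k + 4 + 1) → ℚ) ⧸ rootLattice k (k + 4)) ''
      weightLattice k (k + 4)).ncard = 4 := by
  have hkQ : (k:ℚ) = 2*(t:ℚ) := by rw [hke]; push_cast; ring
  apply final_count hk (wv k 0 0) (wv k (1/2) 0) (wv k 0 (1/2)) (wv k (1/2) (1/2))
  · exact wv_mem_weight hk 0 0 ⟨0, by push_cast; ring⟩ ⟨0, by push_cast; ring⟩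
  · exact wv_mem_weight hk (1/2) 0
      ⟨(t:ℤ), by push_cast; linear_combination (1/2)*hkQ⟩
      ⟨-((t:ℤ)+1), by push_cast; linear_combination (-1/2)*hkQ⟩
  · exact wv_mem_weight hk 0 (1/2)
      ⟨(t:ℤ)+1, by push_cast; linear_combination (1/2)*hkQ⟩
      ⟨-((t:ℤ)+2), by push_cast; linear_combination (-1/2)*hkQ⟩
  · exact wv_mem_weight hk (1/2) (1/2)
      ⟨2*(t:ℤ)+1, by push_cast; linear_combination hkQ⟩
      ⟨-(2*(t:ℤ)+3), by push_cast; linear_combination (-1)*hkQ⟩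
  · intro x hx
    obtain ⟨m, n, α, hm, hn, hα, h2α⟩ := weight_facts hk hx
    have hnZ : n = 2*(α - (t:ℤ)*m) := by
      have : (n:ℚ) = 2*((α:ℚ) - (t:ℚ)*(m:ℚ)) := by
        linear_combination (-1)*h2α - (m:ℚ)*hkQ
      exact_mod_cast this
    set n2 : ℤ := α - (t:ℤ)*m with hn2
    have hx1 : 2*x 1 = (n2:ℚ) := by
      have : (n:ℚ) = 2*(n2:ℚ) := by exact_mod_cast hnZ
      linarith
    set m2 : ℤ := m - n2 with hm2
    have hx0 : 2*x 0 = (m2:ℚ) := by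
      have : (m2:ℚ) = (m:ℚ) - (n2:ℚ) := by rw [hm2, Int.cast_sub]
      linarith
    have main : ∀ s r : ℤ, m2 % 2 = s → n2 % 2 = r →
        x - wv k ((s:ℚ)/2) ((r:ℚ)/2) ∈ qgroup k := by
      intro s r hs hr
      have hm4 : (m2:ℚ) = 2*((m2/2 : ℤ):ℚ) + (s:ℚ) := by
        exact_mod_cast (by omega : m2 = 2*(m2/2) + s)
      have hn4 : (n2:ℚ) = 2*((n2/2 : ℤ):ℚ) + (r:ℚ) := by
        exact_mod_cast (by omega : n2 = 2*(n2/2) + r)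
      apply sub_wv_mem hk hx
      · exact ⟨m2/2, by linarith⟩
      · exact ⟨n2/2, by linarith⟩
      · refine ⟨-((t:ℤ)+1)*s - ((t:ℤ)+2)*r, ?_⟩
        push_cast
        linear_combination (-(s:ℚ)/2 - (r:ℚ)/2)*hkQ
    rcases (by omega : m2 % 2 = 0 ∨ m2 % 2 = 1) with hs | hs <;>
      rcases (by omega : n2 % 2 = 0 ∨ n2 % 2 = 1) with hr | hr
    · exact Or.inl (by simpa using main 0 0 hs hr)
    · exact Or.inr (Or.inr (Or.inl (by simpa using main 0 1 hs hr)))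
    · exact Or.inr (Or.inl (by simpa using main 1 0 hs hr))
    · exact Or.inr (Or.inr (Or.inr (by simpa using main 1 1 hs hr)))
  · exact fun h => not_int_half_diff (Or.inr (by norm_num)) (wv_diff_coords h).1
  · exact fun h => not_int_half_diff (Or.inr (by norm_num)) (wv_diff_coords h).2
  · exact fun h => not_int_half_diff (Or.inr (by norm_num)) (wv_diff_coords h).1
  · exact fun h => not_int_half_diff (Or.inl (by norm_num)) (wv_diff_coords h).1
  · exact fun h => not_int_half_diff (Or.inr (by norm_num)) (wv_diff_coords h).2
  · exact fun h => not_int_half_diff (Or.inr (by norm_num)) (wv_diff_coords h).1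

lemma qgroup_subset_weight (hk : 1 ≤ k) :
    (qgroup k : Set (Fin (k + 4 + 1) → ℚ)) ⊆ weightLattice k (k+4) := by
  intro x hx
  obtain ⟨hint, hrel⟩ := hx
  choose v hv using hint
  refine ⟨?_, ?_⟩
  · rw [bform_omega, hrel, mul_zero]
  · intro m hm
    refine ⟨bformZ k (k+4) v m, ?_⟩
    have hterm : ∀ i, x i * ratOf (k+4) m i = ((v i * m i : ℤ):ℚ) := fun i => by
      rw [hv i]; simp [ratOf]
    rw [bform, Finset.sum_congr rfl (fun i _ => hterm i), hv 0]
    push_cast [bformZ, ratOf]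
    ring

end IdxAux

/-- For `l = k+4`: `Q ⊆ P` and the quotient `P/Q` (realised as the image of `P` in
`ℚ^{l+1}/Q`) is finite of order `4`: the index of connectedness of the root
system `D_{k+4}`. -/
theorem index_of_connectedness_k_plus_four (k : ℕ) (hk : 1 ≤ k) :
    (rootLattice k (k + 4) : Set (Fin (k + 4 + 1) → ℚ)) ⊆ weightLattice k (k + 4) ∧
      ((QuotientAddGroup.mk : (Fin (k + 4 + 1) → ℚ) →
          (Fin (k + 4 + 1) → ℚ) ⧸ rootLattice k (k + 4)) ''
        weightLattice k (k + 4)).ncard = 4 := by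
  constructor
  · intro x hx
    exact IdxAux.qgroup_subset_weight hk (IdxAux.rootLattice_le_qgroup hk hx)
  · rcases Nat.even_or_odd k with ⟨t, ht⟩ | ⟨t, ht⟩
    · exact IdxAux.count_even hk t (by omega)
    · exact IdxAux.count_odd hk t (by omega)
end

section
/- Let m ≥ 1 be an integer and set k = 2m. In the field ℚ(t) of rational functions over ℚ, with P_k(t) = 1 + (k+4)·Σ_{i=1}^{m−1} t^i + (k+5)·t^m + (k+5)·t^{m+1} + (k+4)·Σ_{i=m+2}^{k} t^i + t^{k+1}, the following identity holds: P_k(t)/((1−t)²(1−t^k)) − (k+4)·t/(1−t)³ = (1 − t^{k+2})/((1−t)²(1−t^m)(1−t^{m+1})). (This is the identity H_{ℙ(1,1,k)} + (k+4)·Q = Hilbert series of a hypersurface of degree k+2 in ℙ(1,1,m,m+1).) -/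
/-- The variable `t` in the field `ℚ(t)` of rational functions. -/
noncomputable def t : RatFunc ℚ := RatFunc.X

/-- The numerator `P_k(t)` of the anticanonical Hilbert series of `ℙ(1,1,k)` for even
`k = 2m`. -/
noncomputable def hilbNumEven (m : ℕ) : RatFunc ℚ :=
  1 + ((2 * m : ℕ) + 4 : RatFunc ℚ) * ∑ i ∈ Finset.Icc 1 (m - 1), t ^ i
    + ((2 * m : ℕ) + 5 : RatFunc ℚ) * t ^ m + ((2 * m : ℕ) + 5 : RatFunc ℚ) * t ^ (m + 1)
    + ((2 * m : ℕ) + 4 : RatFunc ℚ) * ∑ i ∈ Finset.Icc (m + 2) (2 * m), t ^ i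
    + t ^ (2 * m + 1)

/-! Summing the two geometric series shows that `(1 - t) P_k(t)` is a polynomial in `t`,
`x = t^m` and `c = k + 4`. After clearing denominators, the identity becomes a polynomial identity
in which `t`, `x` and `c` can be treated as independent variables. -/

theorem one_sub_mul_geom_sum_Icc {R : Type*} [CommRing R] (x : R) {a b : ℕ} (h : a ≤ b + 1) :
    (1 - x) * ∑ i ∈ Finset.Icc a b, x ^ i = x ^ a - x ^ (b + 1) := by
  rw [mul_comm, ← Finset.Ico_add_one_right_eq_Icc, geom_sum_Ico_mul_neg x h]

theorem RatFunc.one_sub_X_pow_ne_zero {K : Type*} [Field K] {n : ℕ} (hn : n ≠ 0) :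
    (1 : RatFunc K) - RatFunc.X ^ n ≠ 0 := by
  rw [← RatFunc.algebraMap_X, ← map_pow, ← map_one (algebraMap (Polynomial K) _), ← map_sub]
  refine RatFunc.algebraMap_ne_zero fun h => ?_
  simpa [Polynomial.coeff_one, hn] using congrArg (Polynomial.coeff · n) h

theorem div_sub_div_eq_of_mul_one_sub_eq {K : Type*} [Field K] {c t x N : K}
    (ht : 1 - t ≠ 0) (hx : 1 - x ≠ 0) (hx2 : 1 - x ^ 2 ≠ 0) (hxt : 1 - x * t ≠ 0)
    (hN : (1 - t) * N = (1 - t) * (1 + (c + 1) * x * (1 + t) + x ^ 2 * t)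
      + c * (t - x + x * t ^ 2 - x ^ 2 * t)) :
    N / ((1 - t) ^ 2 * (1 - x ^ 2)) - c * t / (1 - t) ^ 3
      = (1 - x ^ 2 * t ^ 2) / ((1 - t) ^ 2 * (1 - x) * (1 - x * t)) := by
  rw [div_sub_div _ _ (by positivity) (by positivity), div_eq_div_iff (by positivity) (by positivity)]
  linear_combination (1 - t) ^ 4 * (1 - x) * (1 - x * t) * hN

theorem one_sub_t_mul_hilbNumEven {m : ℕ} (hm : 1 ≤ m) :
    (1 - t) * hilbNumEven m
      = (1 - t) * (1 + (((2 * m : ℕ) + 4 : RatFunc ℚ) + 1) * t ^ m * (1 + t) + (t ^ m) ^ 2 * t)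
        + ((2 * m : ℕ) + 4 : RatFunc ℚ) * (t - t ^ m + t ^ m * t ^ 2 - (t ^ m) ^ 2 * t) := by
  have lower := one_sub_mul_geom_sum_Icc t (a := 1) (b := m - 1) (by omega)
  have upper := one_sub_mul_geom_sum_Icc t (a := m + 2) (b := 2 * m) (by omega)
  rw [Nat.sub_add_cancel hm] at lower
  rw [hilbNumEven]
  linear_combination ((2 * m : ℕ) + 4 : RatFunc ℚ) * (lower + upper)

/-- For `k = 2m`: `H_{ℙ(1,1,k)} + (k+4)·Q` equals the Hilbert series of a hypersurface
of degree `k+2` in `ℙ(1,1,m,m+1)`. -/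
theorem hilbert_series_k_plus_four_even (m : ℕ) (hm : 1 ≤ m) :
    hilbNumEven m / ((1 - t) ^ 2 * (1 - t ^ (2 * m)))
        - ((2 * m : ℕ) + 4 : RatFunc ℚ) * t / (1 - t) ^ 3
      = (1 - t ^ (2 * m + 2)) / ((1 - t) ^ 2 * (1 - t ^ m) * (1 - t ^ (m + 1))) := by
  have h : ∀ {n : ℕ}, n ≠ 0 → (1 : RatFunc ℚ) - t ^ n ≠ 0 := RatFunc.one_sub_X_pow_ne_zero
  have key := div_sub_div_eq_of_mul_one_sub_eq (by simpa using h one_ne_zero)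
    (h (n := m) (by omega)) (by rw [← pow_mul']; exact h (by omega))
    (by rw [← pow_succ]; exact h (by omega)) (one_sub_t_mul_hilbNumEven hm)
  simpa only [← pow_mul', ← pow_succ, ← mul_pow, ← pow_add, pow_one] using key
end

section
/- Let m ≥ 1 be an integer and set k = 2m. In the field ℚ(t) of rational functions over ℚ, with P_k(t) = 1 + (k+4)·Σ_{i=1}^{m−1} t^i + (k+5)·t^m + (k+5)·t^{m+1} + (k+4)·Σ_{i=m+2}^{k} t^i + t^{k+1}, the following identity holds: P_k(t)/((1−t)²(1−t^k)) − (k+3)·t/(1−t)³ = (1 − t^{m+2})/((1−t)³(1−t^m)). (This is the identity H_{ℙ(1,1,k)} + (k+3)·Q = Hilbert series of a hypersurface of degree m+2 in ℙ(1,1,1,m).) -/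
lemma one_sub_t_pow_ne (n : ℕ) (hn : 1 ≤ n) : (1 - t ^ n : RatFunc ℚ) ≠ 0 := by
  have hp : (1 - Polynomial.X ^ n : Polynomial ℚ) ≠ 0 := by
    intro h
    have := congrArg (Polynomial.eval 0) h
    simp [zero_pow (Nat.one_le_iff_ne_zero.mp hn)] at this
  have := (map_ne_zero_iff _ (RatFunc.algebraMap_injective ℚ)).mpr hp
  simpa [t, RatFunc.algebraMap_X] using this

lemma one_sub_t_ne : (1 - t : RatFunc ℚ) ≠ 0 := by
  simpa using one_sub_t_pow_ne 1 le_rfl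

/-- For `k = 2m`: `H_{ℙ(1,1,k)} + (k+3)·Q` equals the Hilbert series of a hypersurface
of degree `m+2` in `ℙ(1,1,1,m)`. -/
theorem hilbert_series_k_plus_three_even (m : ℕ) (hm : 1 ≤ m) :
    hilbNumEven m / ((1 - t) ^ 2 * (1 - t ^ (2 * m)))
        - ((2 * m : ℕ) + 3 : RatFunc ℚ) * t / (1 - t) ^ 3
      = (1 - t ^ (m + 2)) / ((1 - t) ^ 3 * (1 - t ^ m)) := by
  have ht : (1 - t : RatFunc ℚ) ≠ 0 := one_sub_t_ne
  have htm : (1 - t ^ m : RatFunc ℚ) ≠ 0 := one_sub_t_pow_ne m hm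
  have ht2m : (1 - t ^ (2 * m) : RatFunc ℚ) ≠ 0 := one_sub_t_pow_ne _ (by omega)
  have htne1 : (t : RatFunc ℚ) ≠ 1 := fun h => ht (by rw [h]; ring)
  have ht1 : (t : RatFunc ℚ) - 1 ≠ 0 := sub_ne_zero.mpr htne1
  have hS1 : (∑ i ∈ Finset.Icc 1 (m - 1), t ^ i) * (t - 1) = t ^ m - t ^ 1 := by
    have he : Finset.Icc 1 (m - 1) = Finset.Ico 1 m := by
      rw [← Finset.Ico_add_one_right_eq_Icc]; congr 1; omega
    rw [he, geom_sum_Ico htne1 hm, div_mul_cancel₀ _ ht1]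
  have hS2 : (∑ i ∈ Finset.Icc (m + 2) (2 * m), t ^ i) * (t - 1)
      = t ^ (2 * m + 1) - t ^ (m + 2) := by
    have he : Finset.Icc (m + 2) (2 * m) = Finset.Ico (m + 2) (2 * m + 1) := by
      rw [← Finset.Ico_add_one_right_eq_Icc]
    rw [he, geom_sum_Ico htne1 (by omega), div_mul_cancel₀ _ ht1]
  have hN : hilbNumEven m
      = ((t - 1) + ((2 * m : ℕ) + 4 : RatFunc ℚ) * (t ^ m - t ^ 1)
          + ((2 * m : ℕ) + 5 : RatFunc ℚ) * t ^ m * (t - 1)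
          + ((2 * m : ℕ) + 5 : RatFunc ℚ) * t ^ (m + 1) * (t - 1)
          + ((2 * m : ℕ) + 4 : RatFunc ℚ) * (t ^ (2 * m + 1) - t ^ (m + 2))
          + t ^ (2 * m + 1) * (t - 1)) / (t - 1) := by
    rw [eq_div_iff ht1, hilbNumEven]
    linear_combination ((2 * m : ℕ) + 4 : RatFunc ℚ) * hS1
      + ((2 * m : ℕ) + 4 : RatFunc ℚ) * hS2
  have hA : (t - 1) * ((1 - t) ^ 2 * (1 - t ^ (2 * m))) ≠ 0 :=
    mul_ne_zero ht1 (mul_ne_zero (pow_ne_zero 2 ht) ht2m)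
  have hB : ((1 - t) ^ 3 : RatFunc ℚ) ≠ 0 := pow_ne_zero 3 ht
  have hC : ((1 - t) ^ 3 * (1 - t ^ m) : RatFunc ℚ) ≠ 0 :=
    mul_ne_zero (pow_ne_zero 3 ht) htm
  rw [hN, div_div, div_sub_div _ _ hA hB, div_eq_div_iff (mul_ne_zero hA hB) hC]
  push_cast
  simp only [two_mul, pow_add, pow_one]
  ring
end

section
/- Let m ≥ 1 be an integer and set k = 2m. In the field ℚ(t) of rational functions over ℚ, with P_k(t) = 1 + (k+4)·Σ_{i=1}^{m−1} t^i + (k+5)·t^m + (k+5)·t^{m+1} + (k+4)·Σ_{i=m+2}^{k} t^i + t^{k+1}, the following identity holds: P_k(t)/((1−t)²(1−t^k)) − (k+2)·t/(1−t)³ = (1 − t²)(1 − t^{m+1})/((1−t)⁴(1−t^m)). (This is the identity H_{ℙ(1,1,k)} + (k+2)·Q = Hilbert series of a complete intersection of degrees 2 and m+1 in ℙ(1,1,1,1,m).) -/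
lemma t_pow_ne_one (m : ℕ) (hm : 1 ≤ m) : t ^ m ≠ 1 := by
  intro h
  have : (algebraMap (Polynomial ℚ) (RatFunc ℚ)) (Polynomial.X ^ m) = algebraMap _ _ 1 := by
    simpa [map_pow, t, RatFunc.algebraMap_X] using h
  have h2 := RatFunc.algebraMap_injective ℚ this
  have := congrArg (Polynomial.eval 0) h2
  simp [zero_pow (by omega : m ≠ 0)] at this

lemma t_pow_ne_neg_one (m : ℕ) (hm : 1 ≤ m) : t ^ m ≠ -1 := by
  intro h
  have : (algebraMap (Polynomial ℚ) (RatFunc ℚ)) (Polynomial.X ^ m) = algebraMap _ _ (-1) := by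
    simpa [map_pow, t, RatFunc.algebraMap_X] using h
  have h2 := RatFunc.algebraMap_injective ℚ this
  have := congrArg (Polynomial.eval 0) h2
  simp [zero_pow (by omega : m ≠ 0)] at this

/-- For `k = 2m`: `H_{ℙ(1,1,k)} + (k+2)·Q` equals the Hilbert series of a complete
intersection of degrees `2` and `m+1` in `ℙ(1,1,1,1,m)`. -/
theorem hilbert_series_k_plus_two_even (m : ℕ) (hm : 1 ≤ m) :
    hilbNumEven m / ((1 - t) ^ 2 * (1 - t ^ (2 * m)))
        - ((2 * m : ℕ) + 2 : RatFunc ℚ) * t / (1 - t) ^ 3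
      = (1 - t ^ 2) * (1 - t ^ (m + 1)) / ((1 - t) ^ 4 * (1 - t ^ m)) := by
  have ht1 : t ≠ 1 := by simpa using t_pow_ne_one 1 le_rfl
  have hs1 : Finset.Icc 1 (m - 1) = Finset.Ico 1 m := by
    rw [← Finset.Ico_add_one_right_eq_Icc]; congr 1; omega
  have hs2 : Finset.Icc (m + 2) (2 * m) = Finset.Ico (m + 2) (2 * m + 1) := by
    rw [← Finset.Ico_add_one_right_eq_Icc]
  have g1 : ∑ i ∈ Finset.Icc 1 (m - 1), t ^ i = (t ^ m - t ^ 1) / (t - 1) := by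
    rw [hs1, geom_sum_Ico ht1 hm]
  have g2 : ∑ i ∈ Finset.Icc (m + 2) (2 * m), t ^ i
      = (t ^ (2 * m + 1) - t ^ (m + 2)) / (t - 1) := by
    rw [hs2, geom_sum_Ico ht1 (by omega)]
  have e1 : t ^ (m + 1) = t ^ m * t := by rw [pow_succ]
  have e2 : t ^ (m + 2) = t ^ m * t ^ 2 := by rw [pow_add]
  have e3 : t ^ (2 * m) = (t ^ m) ^ 2 := by rw [two_mul, pow_add, sq]
  have e4 : t ^ (2 * m + 1) = (t ^ m) ^ 2 * t := by rw [pow_succ, e3]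
  have hu1 : 1 - t ^ m ≠ 0 := sub_ne_zero.mpr fun h => t_pow_ne_one m hm h.symm
  have hu2 : 1 + t ^ m ≠ 0 := fun h => t_pow_ne_neg_one m hm (by linear_combination h)
  have ht : 1 - t ≠ 0 := sub_ne_zero.mpr fun h => ht1 h.symm
  have ht' : t - 1 ≠ 0 := sub_ne_zero.mpr ht1
  have hfac : 1 - (t ^ m) ^ 2 = (1 - t ^ m) * (1 + t ^ m) := by ring
  rw [hilbNumEven, g1, g2, e1, e2, e3, e4, hfac]
  push_cast
  generalize hu : t ^ m = u at hu1 hu2 ⊢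
  have hd1 : (1 - t) ^ 2 * ((1 - u) * (1 + u)) ≠ 0 :=
    mul_ne_zero (pow_ne_zero _ ht) (mul_ne_zero hu1 hu2)
  have hd2 : (1 - t) ^ 3 ≠ 0 := pow_ne_zero _ ht
  have hd3 : (1 - t) ^ 4 * (1 - u) ≠ 0 := mul_ne_zero (pow_ne_zero _ ht) hu1
  rw [div_sub_div _ _ hd1 hd2, div_eq_div_iff (mul_ne_zero hd1 hd2) hd3]
  field_simp
  ring
end
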